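/- arXiv:2402.12967 — 15 statements merged into one kernel-verified Lean document; each statement's English description precedes it below -/
import Mathlib

section
/- Let y ∈ 𝒴 with P_Y(y) > 0 and let ε_u ≥ 0 be a real number with e^{ε_u}·(1 − p_min) < 1. If P_{X|Y=y}(x) ≤ e^{ε_u}·P_X(x) for every x ∈ 𝒳, then P_{X|Y=y}(x) ≥ ((1 − e^{ε_u}(1 − p_min))/p_min)·P_X(x) for every x ∈ 𝒳; equivalently, min_{x∈𝒳} i(x;y) ≥ −ε_l(ε_u), where ε_l(ε_u) := log( p_min / (1 − e^{ε_u}(1 − p_min)) ). -/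
open Finset Real

/-- Proposition 1: an upper bound `e^{ε_u}` on the posterior-to-prior ratio (for all `x`)
implies the lower bound `(1 - e^{ε_u}(1 - p_min))/p_min` on that ratio, equivalently
`min_x i(x;y) ≥ -ε_l(ε_u)` with `ε_l(ε_u) = log(p_min / (1 - e^{ε_u}(1 - p_min)))`. -/
theorem stmt_0 {𝒳 𝒴 : Type} [Fintype 𝒳] [Nonempty 𝒳] [Fintype 𝒴] [Nonempty 𝒴]
    (PX : 𝒳 → ℝ) (hPXpos : ∀ x, 0 < PX x) (hPXsum : ∑ x, PX x = 1)
    (K : 𝒳 → 𝒴 → ℝ) (hKnn : ∀ x y, 0 ≤ K x y) (hKsum : ∀ x, ∑ y, K x y = 1)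
    (pmin : ℝ) (hpmin : IsLeast (Set.range PX) pmin)
    (y : 𝒴) (hPY : 0 < ∑ x, PX x * K x y)
    (εu : ℝ) (hεu : 0 ≤ εu) (hreg : exp εu * (1 - pmin) < 1)
    (hub : ∀ x, PX x * K x y / (∑ x', PX x' * K x' y) ≤ exp εu * PX x) :
    (∀ x, (1 - exp εu * (1 - pmin)) / pmin * PX x ≤
        PX x * K x y / (∑ x', PX x' * K x' y)) ∧
    (∀ x, -log (pmin / (1 - exp εu * (1 - pmin))) ≤
        log (PX x * K x y / (∑ x', PX x' * K x' y) / PX x)) := by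
  classical
  set S := ∑ x', PX x' * K x' y with hS
  have hpmin_pos : 0 < pmin := by
    obtain ⟨x0, hx0⟩ := hpmin.1
    exact hx0 ▸ hPXpos x0
  have hc_pos : 0 < 1 - exp εu * (1 - pmin) := by linarith
  have key : ∀ x, (1 - exp εu * (1 - pmin)) / pmin * PX x ≤ PX x * K x y / S := by
    intro x
    have hsum1 : ∑ x', PX x' * K x' y / S = 1 := by
      rw [← Finset.sum_div]; exact div_self hPY.ne'
    have hsplit : PX x * K x y / S + ∑ x' ∈ Finset.univ.erase x, PX x' * K x' y / S = 1 := by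
      exact (Finset.add_sum_erase Finset.univ (fun x' => PX x' * K x' y / S)
        (Finset.mem_univ x)).trans hsum1
    have hPXsplit : PX x + ∑ x' ∈ Finset.univ.erase x, PX x' = 1 :=
      (Finset.add_sum_erase Finset.univ PX (Finset.mem_univ x)).trans hPXsum
    have hbound : ∑ x' ∈ Finset.univ.erase x, PX x' * K x' y / S ≤ exp εu * (1 - PX x) := by
      have h1 : ∑ x' ∈ Finset.univ.erase x, PX x' * K x' y / S ≤
          ∑ x' ∈ Finset.univ.erase x, exp εu * PX x' :=
        Finset.sum_le_sum fun x' _ => hub x'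
      have h2 : ∑ x' ∈ Finset.univ.erase x, exp εu * PX x' = exp εu * (1 - PX x) := by
        rw [← Finset.mul_sum]
        congr 1
        linarith
      linarith
    have hlow : 1 - exp εu * (1 - PX x) ≤ PX x * K x y / S := by linarith
    have hxge : pmin ≤ PX x := hpmin.2 ⟨x, rfl⟩
    have he1 : (1:ℝ) ≤ exp εu := by
      calc (1:ℝ) = exp 0 := (Real.exp_zero).symm
      _ ≤ exp εu := Real.exp_le_exp.mpr hεu
    have hstep : (1 - exp εu * (1 - pmin)) / pmin * PX x ≤ 1 - exp εu * (1 - PX x) := by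
      rw [div_mul_eq_mul_div, div_le_iff₀ hpmin_pos]
      nlinarith [hPXpos x, mul_le_mul_of_nonneg_left hxge (by linarith : (0:ℝ) ≤ exp εu - 1)]
    linarith
  refine ⟨key, fun x => ?_⟩
  have h2 : (1 - exp εu * (1 - pmin)) / pmin ≤ PX x * K x y / S / PX x := by
    rw [le_div_iff₀ (hPXpos x)]; exact key x
  rw [← Real.log_inv, inv_div]
  exact Real.log_le_log (by positivity) h2
end

section
/- Let y ∈ 𝒴 with P_Y(y) > 0 and let ε_l ≥ 0 be a real number. If P_{X|Y=y}(x) ≥ e^{−ε_l}·P_X(x) for every x ∈ 𝒳, then P_{X|Y=y}(x) ≤ ((1 − e^{−ε_l}(1 − p_min))/p_min)·P_X(x) for every x ∈ 𝒳; equivalently, max_{x∈𝒳} i(x;y) ≤ ε_u(ε_l), where ε_u(ε_l) := log( (1 − e^{−ε_l}(1 − p_min)) / p_min ). -/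
open Finset Real

/-- Proposition 2: a lower bound `e^{-ε_l}` on the posterior-to-prior ratio (for all `x`)
implies the upper bound `(1 - e^{-ε_l}(1 - p_min))/p_min` on that ratio, equivalently
`max_x i(x;y) ≤ ε_u(ε_l)` with `ε_u(ε_l) = log((1 - e^{-ε_l}(1 - p_min))/p_min)`. -/
theorem stmt_1 {𝒳 𝒴 : Type} [Fintype 𝒳] [Nonempty 𝒳] [Fintype 𝒴] [Nonempty 𝒴]
    (PX : 𝒳 → ℝ) (hPXpos : ∀ x, 0 < PX x) (hPXsum : ∑ x, PX x = 1)
    (K : 𝒳 → 𝒴 → ℝ) (hKnn : ∀ x y, 0 ≤ K x y) (hKsum : ∀ x, ∑ y, K x y = 1)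
    (pmin : ℝ) (hpmin : IsLeast (Set.range PX) pmin)
    (y : 𝒴) (hPY : 0 < ∑ x, PX x * K x y)
    (εl : ℝ) (hεl : 0 ≤ εl)
    (hlb : ∀ x, exp (-εl) * PX x ≤ PX x * K x y / (∑ x', PX x' * K x' y)) :
    (∀ x, PX x * K x y / (∑ x', PX x' * K x' y) ≤
        (1 - exp (-εl) * (1 - pmin)) / pmin * PX x) ∧
    (∀ x, log (PX x * K x y / (∑ x', PX x' * K x' y) / PX x) ≤
        log ((1 - exp (-εl) * (1 - pmin)) / pmin)) := by
  classical
  set S := ∑ x, PX x * K x y with hS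
  set a := exp (-εl) with ha
  have hapos : 0 < a := exp_pos _
  have hale : a ≤ 1 := exp_le_one_iff.mpr (by linarith)
  have hpminpos : 0 < pmin := by
    obtain ⟨x0, hx0⟩ := hpmin.1
    rw [← hx0]; exact hPXpos x0
  have hpminle : ∀ x, pmin ≤ PX x := fun x => hpmin.2 ⟨x, rfl⟩
  -- posterior sums to 1
  have hQsum : ∑ x, PX x * K x y / S = 1 := by
    rw [← Finset.sum_div, ← hS, div_self (ne_of_gt hPY)]
  -- key bound: Q x ≤ 1 - a * (1 - PX x)
  have hkey : ∀ x, PX x * K x y / S ≤ 1 - a * (1 - PX x) := by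
    intro x
    have hsplit := Finset.add_sum_erase Finset.univ (fun x' => PX x' * K x' y / S)
      (Finset.mem_univ x)
    rw [hQsum] at hsplit
    have hrest : a * (1 - PX x) ≤ ∑ x' ∈ Finset.univ.erase x, PX x' * K x' y / S := by
      have h1 : ∑ x' ∈ Finset.univ.erase x, a * PX x' ≤
          ∑ x' ∈ Finset.univ.erase x, PX x' * K x' y / S :=
        Finset.sum_le_sum fun x' _ => hlb x'
      have h2 : ∑ x' ∈ Finset.univ.erase x, a * PX x' = a * (1 - PX x) := by
        rw [← Finset.mul_sum]
        congr 1
        have := Finset.add_sum_erase Finset.univ PX (Finset.mem_univ x)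
        rw [hPXsum] at this
        linarith
      linarith
    linarith
  have hmain : ∀ x, PX x * K x y / S ≤ (1 - a * (1 - pmin)) / pmin * PX x := by
    intro x
    refine (hkey x).trans ?_
    rw [div_mul_eq_mul_div, le_div_iff₀ hpminpos]
    nlinarith [hpminle x, hPXpos x]
  refine ⟨hmain, fun x => ?_⟩
  have hQpos : 0 < PX x * K x y / S :=
    lt_of_lt_of_le (mul_pos hapos (hPXpos x)) (hlb x)
  have hpos : 0 < PX x * K x y / S / PX x := div_pos hQpos (hPXpos x)
  have : PX x * K x y / S / PX x ≤ (1 - a * (1 - pmin)) / pmin := by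
    rw [div_le_iff₀ (hPXpos x)]
    exact hmain x
  exact Real.log_le_log hpos this
end

section
/- Let ε ≥ 0 satisfy e^{ε}·(1 − p_min) < 1. If the mechanism P_{Y|X} satisfies ε-PML, then it satisfies (ε_l(ε), ε)-ALIP, where ε_l(ε) := log( p_min / (1 − e^{ε}(1 − p_min)) ). -/
open Finset Real

/-- Corollary 1: in the high-privacy regime `e^ε (1 - p_min) < 1`, `ε`-PML implies
`(ε_l(ε), ε)`-ALIP with `ε_l(ε) = log(p_min / (1 - e^ε (1 - p_min)))`. -/
theorem stmt_4 {𝒳 𝒴 : Type} [Fintype 𝒳] [Nonempty 𝒳] [Fintype 𝒴] [Nonempty 𝒴]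
    (PX : 𝒳 → ℝ) (hPXpos : ∀ x, 0 < PX x) (hPXsum : ∑ x, PX x = 1)
    (K : 𝒳 → 𝒴 → ℝ) (hKnn : ∀ x y, 0 ≤ K x y) (hKsum : ∀ x, ∑ y, K x y = 1)
    (pmin : ℝ) (hpmin : IsLeast (Set.range PX) pmin)
    (ε : ℝ) (hε : 0 ≤ ε) (hreg : exp ε * (1 - pmin) < 1)
    (hPML : ∀ y, 0 < (∑ x, PX x * K x y) →
      ∀ x, PX x * K x y / (∑ x', PX x' * K x' y) ≤ exp ε * PX x) :
    ∀ y, 0 < (∑ x, PX x * K x y) →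
      ∀ x, exp (-(log (pmin / (1 - exp ε * (1 - pmin))))) * PX x ≤
            PX x * K x y / (∑ x', PX x' * K x' y) ∧
          PX x * K x y / (∑ x', PX x' * K x' y) ≤ exp ε * PX x := by
  classical
  intro y hS x
  obtain ⟨x0, hx0⟩ := hpmin.1
  have hpminpos : 0 < pmin := hx0 ▸ hPXpos x0
  have hple : pmin ≤ PX x := hpmin.2 ⟨x, rfl⟩
  have hdenpos : 0 < 1 - exp ε * (1 - pmin) := by linarith
  have hexp : exp (-(log (pmin / (1 - exp ε * (1 - pmin))))) =
      (1 - exp ε * (1 - pmin)) / pmin := by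
    rw [Real.exp_neg, exp_log (by positivity), inv_div]
  refine ⟨?_, hPML y hS x⟩
  rw [hexp]
  have hQsum : ∑ x', PX x' * K x' y / (∑ x'', PX x'' * K x'' y) = 1 := by
    rw [← Finset.sum_div, div_self hS.ne']
  have hPerase : ∑ x' ∈ Finset.univ.erase x, PX x' = 1 - PX x := by
    have := Finset.add_sum_erase Finset.univ PX (Finset.mem_univ x)
    linarith
  have herase : ∑ x' ∈ Finset.univ.erase x, PX x' * K x' y / (∑ x'', PX x'' * K x'' y)
      ≤ exp ε * (1 - PX x) := by
    calc ∑ x' ∈ Finset.univ.erase x, PX x' * K x' y / (∑ x'', PX x'' * K x'' y)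
        ≤ ∑ x' ∈ Finset.univ.erase x, exp ε * PX x' :=
          Finset.sum_le_sum fun x' _ => hPML y hS x'
      _ = exp ε * (1 - PX x) := by rw [← Finset.mul_sum, hPerase]
  have hQx : PX x * K x y / (∑ x', PX x' * K x' y)
      = 1 - ∑ x' ∈ Finset.univ.erase x,
          PX x' * K x' y / (∑ x'', PX x'' * K x'' y) := by
    have := Finset.add_sum_erase Finset.univ
      (fun x' => PX x' * K x' y / (∑ x'', PX x'' * K x'' y)) (Finset.mem_univ x)
    linarith [hQsum]
  rw [hQx, div_mul_eq_mul_div, div_le_iff₀ hpminpos]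
  have h1 : (1:ℝ) ≤ exp ε := one_le_exp hε
  nlinarith [hple, hPXpos x, herase]
end

section
/- Assume |𝒳| ≥ 2 and let ε ≥ 0 satisfy e^{ε}·(1 − p_min) < 1. If the mechanism P_{Y|X} satisfies ε-PML, then it satisfies ε_LIP-LIP, where ε_LIP := log( p_min / (1 − e^{ε}(1 − p_min)) ). -/
open Finset Real

/-- Corollary 2: for `|𝒳| ≥ 2` and in the high-privacy regime `e^ε (1 - p_min) < 1`,
`ε`-PML implies `ε_LIP`-LIP with `ε_LIP = log(p_min / (1 - e^ε (1 - p_min)))`. -/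
theorem stmt_5 {𝒳 𝒴 : Type} [Fintype 𝒳] [Nonempty 𝒳] [Fintype 𝒴] [Nonempty 𝒴]
    (hcard : 2 ≤ Fintype.card 𝒳)
    (PX : 𝒳 → ℝ) (hPXpos : ∀ x, 0 < PX x) (hPXsum : ∑ x, PX x = 1)
    (K : 𝒳 → 𝒴 → ℝ) (hKnn : ∀ x y, 0 ≤ K x y) (hKsum : ∀ x, ∑ y, K x y = 1)
    (pmin : ℝ) (hpmin : IsLeast (Set.range PX) pmin)
    (ε : ℝ) (hε : 0 ≤ ε) (hreg : exp ε * (1 - pmin) < 1)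
    (hPML : ∀ y, 0 < (∑ x, PX x * K x y) →
      ∀ x, PX x * K x y / (∑ x', PX x' * K x' y) ≤ exp ε * PX x) :
    ∀ y, 0 < (∑ x, PX x * K x y) →
      ∀ x, exp (-(log (pmin / (1 - exp ε * (1 - pmin))))) * PX x ≤
            PX x * K x y / (∑ x', PX x' * K x' y) ∧
          PX x * K x y / (∑ x', PX x' * K x' y) ≤
            exp (log (pmin / (1 - exp ε * (1 - pmin)))) * PX x := by
  classical
  intro y hS x
  set a : ℝ := exp ε with ha
  have ha1 : (1:ℝ) ≤ a := Real.one_le_exp hε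
  have hpm_le : ∀ x', pmin ≤ PX x' := fun x' => hpmin.2 ⟨x', rfl⟩
  have hpm_pos : 0 < pmin := by
    obtain ⟨x0, hx0⟩ := hpmin.1
    exact hx0 ▸ hPXpos x0
  -- pmin ≤ 1/2
  have hhalf : pmin ≤ 1/2 := by
    obtain ⟨x1, x2, hne⟩ := Fintype.one_lt_card_iff.mp (show 1 < Fintype.card 𝒳 by omega)
    have hsub : ({x1, x2} : Finset 𝒳) ⊆ Finset.univ := Finset.subset_univ _
    have hsum2 : PX x1 + PX x2 ≤ 1 := by
      have := Finset.sum_le_sum_of_subset_of_nonneg hsub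
        (fun i _ _ => (hPXpos i).le)
      rw [Finset.sum_pair hne] at this
      linarith [hPXsum ▸ this]
    linarith [hpm_le x1, hpm_le x2]
  have hc : (0:ℝ) < 1 - a * (1 - pmin) := by linarith
  have ht : (0:ℝ) < pmin / (1 - a * (1 - pmin)) := div_pos hpm_pos hc
  rw [Real.exp_log ht, Real.exp_neg, Real.exp_log ht]
  set S : ℝ := ∑ x', PX x' * K x' y with hSdef
  set Q : 𝒳 → ℝ := fun x' => PX x' * K x' y / S with hQ
  have hQsum : ∑ x', Q x' = 1 := by
    simp only [hQ]
    rw [← Finset.sum_div]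
    exact div_self (ne_of_gt hS)
  have hQnn : ∀ x', 0 ≤ Q x' :=
    fun x' => div_nonneg (mul_nonneg (hPXpos x').le (hKnn x' y)) hS.le
  have hQub : ∀ x', Q x' ≤ a * PX x' := fun x' => hPML y hS x'
  -- lower bound: Q x ≥ 1 - a * (1 - PX x)
  have hQlb : 1 - a * (1 - PX x) ≤ Q x := by
    have h1 : Q x + ∑ x' ∈ Finset.univ.erase x, Q x' = 1 := by
      rw [Finset.add_sum_erase _ _ (Finset.mem_univ x)]; exact hQsum
    have h2 : PX x + ∑ x' ∈ Finset.univ.erase x, PX x' = 1 := by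
      rw [Finset.add_sum_erase _ _ (Finset.mem_univ x)]; exact hPXsum
    have h3 : ∑ x' ∈ Finset.univ.erase x, Q x' ≤
        ∑ x' ∈ Finset.univ.erase x, (a * PX x') :=
      Finset.sum_le_sum (fun i _ => hQub i)
    rw [← Finset.mul_sum] at h3
    nlinarith
  constructor
  · -- (1 - a(1-pmin))/pmin * PX x ≤ Q x
    have key : (pmin / (1 - a * (1 - pmin)))⁻¹ * PX x ≤ 1 - a * (1 - PX x) := by
      rw [inv_div, div_mul_eq_mul_div, div_le_iff₀ hpm_pos]
      nlinarith [hpm_le x, hPXpos x]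
    linarith
  · -- Q x ≤ pmin/(1 - a(1-pmin)) * PX x
    have key : a ≤ pmin / (1 - a * (1 - pmin)) := by
      rw [le_div_iff₀ hc]
      nlinarith [mul_nonneg (sub_nonneg.2 ha1) (sub_nonneg.2 (by nlinarith : (1:ℝ) ≤ (1 - pmin) * (a + 1)))]
    calc Q x ≤ a * PX x := hQub x
      _ ≤ _ := by nlinarith [hPXpos x]
end

section
/- Let ε ≥ 0 satisfy e^{ε}·(1 − p_min) < 1. If the mechanism P_{Y|X} satisfies ε-PML, then it satisfies (ε_l(ε) + ε)-LDP, where ε_l(ε) := log( p_min / (1 − e^{ε}(1 − p_min)) ); that is, P_{Y|X=x'}(y) ≤ e^{ε_l(ε)+ε}·P_{Y|X=x}(y) for all x, x' ∈ 𝒳 and all y ∈ 𝒴. -/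
open Finset Real

/-- Corollary 3: in the high-privacy regime `e^ε (1 - p_min) < 1`, `ε`-PML implies
`(ε_l(ε) + ε)`-LDP with `ε_l(ε) = log(p_min / (1 - e^ε (1 - p_min)))`. -/
theorem stmt_7 {𝒳 𝒴 : Type} [Fintype 𝒳] [Nonempty 𝒳] [Fintype 𝒴] [Nonempty 𝒴]
    (PX : 𝒳 → ℝ) (hPXpos : ∀ x, 0 < PX x) (hPXsum : ∑ x, PX x = 1)
    (K : 𝒳 → 𝒴 → ℝ) (hKnn : ∀ x y, 0 ≤ K x y) (hKsum : ∀ x, ∑ y, K x y = 1)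
    (pmin : ℝ) (hpmin : IsLeast (Set.range PX) pmin)
    (ε : ℝ) (hε : 0 ≤ ε) (hreg : exp ε * (1 - pmin) < 1)
    (hPML : ∀ y, 0 < (∑ x, PX x * K x y) →
      ∀ x, PX x * K x y / (∑ x', PX x' * K x' y) ≤ exp ε * PX x) :
    ∀ x x' y, K x' y ≤ exp (log (pmin / (1 - exp ε * (1 - pmin))) + ε) * K x y := by
  classical
  obtain ⟨⟨x0, hx0⟩, hlb⟩ := hpmin
  have hpmin_pos : 0 < pmin := hx0 ▸ hPXpos x0
  have hA : 0 < 1 - exp ε * (1 - pmin) := by linarith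
  have hE1 : (1:ℝ) ≤ exp ε := one_le_exp hε
  have hratio : 0 < pmin / (1 - exp ε * (1 - pmin)) := div_pos hpmin_pos hA
  have hexp : exp (log (pmin / (1 - exp ε * (1 - pmin))) + ε)
      = pmin / (1 - exp ε * (1 - pmin)) * exp ε := by
    rw [exp_add, exp_log hratio]
  intro x x' y
  rw [hexp]
  set S := ∑ x'', PX x'' * K x'' y with hSdef
  have hSnn : 0 ≤ S := Finset.sum_nonneg fun x'' _ => mul_nonneg (hPXpos x'').le (hKnn x'' y)
  rcases eq_or_lt_of_le hSnn with hS0 | hS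
  · -- S = 0 : all terms vanish
    have hz : ∀ x'' ∈ Finset.univ, PX x'' * K x'' y = 0 := by
      rw [← Finset.sum_eq_zero_iff_of_nonneg
        (fun x'' _ => mul_nonneg (hPXpos x'').le (hKnn x'' y))]
      exact hS0.symm
    have hK' : K x' y = 0 := by
      have := hz x' (Finset.mem_univ x')
      have hp := (hPXpos x').ne'
      rcases mul_eq_zero.mp this with h | h
      · exact absurd h hp
      · exact h
    rw [hK']
    exact mul_nonneg (mul_nonneg hratio.le (exp_pos ε).le) (hKnn x y)
  · -- S > 0
    have hup : ∀ x'', PX x'' * K x'' y ≤ exp ε * PX x'' * S := by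
      intro x''
      have := hPML y hS x''
      rw [div_le_iff₀ hS] at this
      linarith [this]
    have hKx' : K x' y ≤ exp ε * S := by
      have := hup x'
      have hp := hPXpos x'
      nlinarith [hup x', hPXpos x', hx0 ▸ hlb ⟨x', rfl⟩]
    -- lower bound for K x y
    have hrest : S - PX x * K x y ≤ exp ε * S * (1 - PX x) := by
      have hsplit : ∑ x'' ∈ Finset.univ.erase x, PX x'' * K x'' y + PX x * K x y = S :=
        Finset.sum_erase_add _ _ (Finset.mem_univ x)
      have hsplit2 : ∑ x'' ∈ Finset.univ.erase x, PX x'' + PX x = 1 := by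
        rw [Finset.sum_erase_add _ _ (Finset.mem_univ x)]; exact hPXsum
      have hb : ∑ x'' ∈ Finset.univ.erase x, PX x'' * K x'' y
          ≤ ∑ x'' ∈ Finset.univ.erase x, exp ε * PX x'' * S :=
        Finset.sum_le_sum fun x'' _ => hup x''
      have hc : ∑ x'' ∈ Finset.univ.erase x, exp ε * PX x'' * S
          = exp ε * S * (1 - PX x) := by
        rw [← Finset.sum_mul, ← Finset.mul_sum]
        have : ∑ x'' ∈ Finset.univ.erase x, PX x'' = 1 - PX x := by linarith
        rw [this]; ring
      linarith
    have hlow : PX x * K x y ≥ S * (1 - exp ε * (1 - PX x)) := by nlinarith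
    have hpx : pmin ≤ PX x := hlb ⟨x, rfl⟩
    have hKxlow : S * (1 - exp ε * (1 - pmin)) ≤ pmin * K x y := by
      nlinarith [mul_le_mul_of_nonneg_left hlow.le hpmin_pos.le,
        mul_nonneg (mul_nonneg hS.le (sub_nonneg.2 hE1)) (sub_nonneg.2 hpx),
        hPXpos x, hKnn x y]
    rw [div_mul_eq_mul_div, div_mul_eq_mul_div, le_div_iff₀ hA]
    nlinarith [hKx', hKxlow, exp_pos ε, hS]
end

section
/- Let ε_u ≥ 0 satisfy e^{ε_u}·(1 − p_min) < 1 and let ε_l ≥ ε_l(ε_u) := log( p_min / (1 − e^{ε_u}(1 − p_min)) ). Then a mechanism P_{Y|X} satisfies (ε_l, ε_u)-ALIP if and only if it satisfies ε_u-PML. Consequently, for any real-valued utility functional F on mechanisms, a mechanism maximizing F over all mechanisms satisfying ε_u-PML also maximizes F over all mechanisms satisfying (ε_l, ε_u)-ALIP, and vice versa. -/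
open Finset Real

variable {𝒳 𝒴 : Type} [Fintype 𝒳] [Fintype 𝒴]

/-- `K` is a valid mechanism (row-stochastic kernel). -/
def IsMechanism (K : 𝒳 → 𝒴 → ℝ) : Prop :=
  (∀ x y, 0 ≤ K x y) ∧ ∀ x, ∑ y, K x y = 1

/-- `K` satisfies `ε`-PML w.r.t. the prior `PX`. -/
def SatisfiesPML (PX : 𝒳 → ℝ) (K : 𝒳 → 𝒴 → ℝ) (ε : ℝ) : Prop :=
  ∀ y, 0 < (∑ x, PX x * K x y) →
    ∀ x, PX x * K x y / (∑ x', PX x' * K x' y) ≤ exp ε * PX x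

/-- `K` satisfies `(ε_l, ε_u)`-ALIP w.r.t. the prior `PX`. -/
def SatisfiesALIP (PX : 𝒳 → ℝ) (K : 𝒳 → 𝒴 → ℝ) (εl εu : ℝ) : Prop :=
  ∀ y, 0 < (∑ x, PX x * K x y) →
    ∀ x, exp (-εl) * PX x ≤ PX x * K x y / (∑ x', PX x' * K x' y) ∧
      PX x * K x y / (∑ x', PX x' * K x' y) ≤ exp εu * PX x

/-- Proposition 3: for `e^{ε_u}(1 - p_min) < 1` and `ε_l ≥ ε_l(ε_u)`, `(ε_l, ε_u)`-ALIP is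
equivalent to `ε_u`-PML; consequently optimal mechanisms for the two constraints coincide,
for any utility functional. -/
theorem stmt_8 [Nonempty 𝒳] [Nonempty 𝒴]
    (PX : 𝒳 → ℝ) (hPXpos : ∀ x, 0 < PX x) (hPXsum : ∑ x, PX x = 1)
    (pmin : ℝ) (hpmin : IsLeast (Set.range PX) pmin)
    (εu εl : ℝ) (hεu : 0 ≤ εu) (hreg : exp εu * (1 - pmin) < 1)
    (hεl : log (pmin / (1 - exp εu * (1 - pmin))) ≤ εl) :
    (∀ K : 𝒳 → 𝒴 → ℝ, IsMechanism K →
      (SatisfiesALIP PX K εl εu ↔ SatisfiesPML PX K εu)) ∧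
    (∀ F : (𝒳 → 𝒴 → ℝ) → ℝ, ∀ K : 𝒳 → 𝒴 → ℝ, IsMechanism K →
      SatisfiesPML PX K εu →
      (∀ K', IsMechanism K' → SatisfiesPML PX K' εu → F K' ≤ F K) →
      (SatisfiesALIP PX K εl εu ∧
        ∀ K', IsMechanism K' → SatisfiesALIP PX K' εl εu → F K' ≤ F K)) ∧
    (∀ F : (𝒳 → 𝒴 → ℝ) → ℝ, ∀ K : 𝒳 → 𝒴 → ℝ, IsMechanism K →
      SatisfiesALIP PX K εl εu →
      (∀ K', IsMechanism K' → SatisfiesALIP PX K' εl εu → F K' ≤ F K) →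
      (SatisfiesPML PX K εu ∧
        ∀ K', IsMechanism K' → SatisfiesPML PX K' εu → F K' ≤ F K)) := by
  obtain ⟨⟨x0, hx0⟩, hlb⟩ := hpmin
  have hm : 0 < pmin := hx0 ▸ hPXpos x0
  have hD : 0 < 1 - exp εu * (1 - pmin) := by linarith
  have hE : 1 ≤ exp εu := by
    rw [← Real.exp_zero]; exact Real.exp_le_exp.mpr hεu
  have hEexp : exp (-εl) ≤ (1 - exp εu * (1 - pmin)) / pmin := by
    have h1 : exp (-εl) ≤ exp (-(log (pmin / (1 - exp εu * (1 - pmin))))) :=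
      Real.exp_le_exp.mpr (by linarith)
    have h2 : exp (-(log (pmin / (1 - exp εu * (1 - pmin)))))
        = (1 - exp εu * (1 - pmin)) / pmin := by
      rw [Real.exp_neg, Real.exp_log (div_pos hm hD), inv_div]
    linarith
  have key : ∀ K : 𝒳 → 𝒴 → ℝ, IsMechanism K →
      (SatisfiesALIP PX K εl εu ↔ SatisfiesPML PX K εu) := by
    intro K hK
    classical
    constructor
    · intro h y hy x; exact (h y hy x).2
    · intro h y hy x
      refine ⟨?_, h y hy x⟩
      set S := ∑ x', PX x' * K x' y with hS
      have hq1 : ∑ x', PX x' * K x' y / S = 1 := by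
        rw [← Finset.sum_div]; exact div_self (ne_of_gt hy)
      have hsplit : PX x * K x y / S + ∑ x' ∈ univ.erase x, PX x' * K x' y / S = 1 := by
        rw [Finset.add_sum_erase univ (fun x' => PX x' * K x' y / S) (mem_univ x)]
        exact hq1
      have h2 : PX x + ∑ x' ∈ univ.erase x, PX x' = 1 := by
        rw [Finset.add_sum_erase univ PX (mem_univ x)]; exact hPXsum
      have hb : ∑ x' ∈ univ.erase x, PX x' * K x' y / S
          ≤ exp εu * (1 - PX x) := by
        have h1 : ∑ x' ∈ univ.erase x, PX x' * K x' y / S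
            ≤ ∑ x' ∈ univ.erase x, exp εu * PX x' :=
          Finset.sum_le_sum (fun x' _ => h y hy x')
        rw [← Finset.mul_sum] at h1
        have : ∑ x' ∈ univ.erase x, PX x' = 1 - PX x := by linarith
        rw [this] at h1; exact h1
      have ha : pmin ≤ PX x := hlb ⟨x, rfl⟩
      have h3 : exp (-εl) * PX x ≤ (1 - exp εu * (1 - pmin)) / pmin * PX x :=
        mul_le_mul_of_nonneg_right hEexp (le_of_lt (hPXpos x))
      have h4 : (1 - exp εu * (1 - pmin)) / pmin * PX x ≤ 1 - exp εu * (1 - PX x) := by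
        rw [div_mul_eq_mul_div, div_le_iff₀ hm]
        nlinarith [mul_nonneg (sub_nonneg.mpr hE) (sub_nonneg.mpr ha)]
      linarith
  refine ⟨key, ?_, ?_⟩
  · intro F K hK hPML hopt
    exact ⟨(key K hK).mpr hPML, fun K' hK' hA => hopt K' hK' ((key K' hK').mp hA)⟩
  · intro F K hK hA hopt
    exact ⟨(key K hK).mp hA, fun K' hK' hP => hopt K' hK' ((key K' hK').mpr hP)⟩
end

section
/- Let ε ≥ 0 satisfy e^{ε}·(1 − p_min) < 1, take 𝒴 = 𝒳, and let P* be the mechanism P*_{Y|X=x}(y) := 1 − e^{ε}·(1 − P_X(x)) if y = x and e^{ε}·P_X(y) if y ≠ x. Then: (a) the induced output distribution satisfies P_Y(y) = P_X(y) for all y; (b) for all x ≠ y, P_{X|Y=y}(x) = e^{ε}·P_X(x), and for y = x, P_{X|Y=y}(y) = 1 − e^{ε}·(1 − P_X(y)); (c) P* satisfies ε-PML; and (d) if x* attains p_min, then P_{X|Y=x*}(x*)/P_X(x*) = (1 − e^{ε}(1 − p_min))/p_min, i.e., the ALIP lower bound ε_l(ε) = log( p_min / (1 − e^{ε}(1 −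 p_min)) ) is attained. -/
open Finset Real

/-- Properties of the high-privacy PML mechanism `P*` (with `𝒴 = 𝒳`):
(a) the output distribution equals the prior; (b) explicit posterior formulas;
(c) `P*` satisfies `ε`-PML; (d) the ALIP lower bound `ε_l(ε)` is attained at a minimizer
`x*` of `P_X`. -/
theorem stmt_10 {𝒳 : Type} [Fintype 𝒳] [Nonempty 𝒳] [DecidableEq 𝒳]
    (PX : 𝒳 → ℝ) (hPXpos : ∀ x, 0 < PX x) (hPXsum : ∑ x, PX x = 1)
    (pmin : ℝ) (hpmin : IsLeast (Set.range PX) pmin)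
    (ε : ℝ) (hε : 0 ≤ ε) (hreg : exp ε * (1 - pmin) < 1)
    (Pstar : 𝒳 → 𝒳 → ℝ)
    (hPstar : ∀ x y, Pstar x y = if y = x then 1 - exp ε * (1 - PX x) else exp ε * PX y) :
    -- (a) output distribution equals the prior
    (∀ y, ∑ x, PX x * Pstar x y = PX y) ∧
    -- (b) posterior formulas
    (∀ x y, x ≠ y →
      PX x * Pstar x y / (∑ x', PX x' * Pstar x' y) = exp ε * PX x) ∧
    (∀ y, PX y * Pstar y y / (∑ x', PX x' * Pstar x' y) = 1 - exp ε * (1 - PX y)) ∧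
    -- (c) ε-PML
    (∀ y, 0 < (∑ x, PX x * Pstar x y) →
      ∀ x, PX x * Pstar x y / (∑ x', PX x' * Pstar x' y) ≤ exp ε * PX x) ∧
    -- (d) the ALIP lower bound is attained
    (∀ xstar, PX xstar = pmin →
      (PX xstar * Pstar xstar xstar / (∑ x', PX x' * Pstar x' xstar)) / PX xstar =
        (1 - exp ε * (1 - pmin)) / pmin ∧
      log ((PX xstar * Pstar xstar xstar / (∑ x', PX x' * Pstar x' xstar)) / PX xstar) =
        -(log (pmin / (1 - exp ε * (1 - pmin))))) := by
  have ha : ∀ y, ∑ x, PX x * Pstar x y = PX y := by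
    intro y
    have hsplit : ∑ x, PX x * Pstar x y =
        PX y * Pstar y y + ∑ x ∈ Finset.univ.erase y, PX x * Pstar x y := by
      rw [← Finset.add_sum_erase _ _ (Finset.mem_univ y)]
    have herase : ∑ x ∈ Finset.univ.erase y, PX x * Pstar x y =
        exp ε * PX y * ∑ x ∈ Finset.univ.erase y, PX x := by
      rw [Finset.mul_sum]
      refine Finset.sum_congr rfl fun x hx => ?_
      have hxy : x ≠ y := (Finset.mem_erase.mp hx).1
      rw [hPstar x y, if_neg (fun h => hxy h.symm)]; ring
    have hsum' : ∑ x ∈ Finset.univ.erase y, PX x = 1 - PX y := by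
      have := Finset.add_sum_erase Finset.univ PX (Finset.mem_univ y)
      linarith [hPXsum, this.symm]
    rw [hsplit, herase, hsum', hPstar y y, if_pos rfl]; ring
  have hb1 : ∀ x y, x ≠ y →
      PX x * Pstar x y / (∑ x', PX x' * Pstar x' y) = exp ε * PX x := by
    intro x y hxy
    rw [ha y, hPstar x y, if_neg (fun h => hxy (h.symm))]
    field_simp [(hPXpos y).ne']
  have hb2 : ∀ y, PX y * Pstar y y / (∑ x', PX x' * Pstar x' y) = 1 - exp ε * (1 - PX y) := by
    intro y
    rw [ha y, hPstar y y, if_pos rfl]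
    field_simp [(hPXpos y).ne']
  refine ⟨ha, hb1, hb2, ?_, ?_⟩
  · intro y _ x
    by_cases hxy : x = y
    · subst hxy
      rw [hb2 x]
      have h1 : 1 ≤ exp ε := by
        have := Real.exp_le_exp.mpr hε
        simpa using Real.one_le_exp hε
      nlinarith [hPXpos x, Real.exp_pos ε]
    · rw [hb1 x y hxy]
  · intro xstar hx
    have hpos : (0:ℝ) < 1 - exp ε * (1 - pmin) := by linarith
    have hpminpos : 0 < pmin := hx ▸ hPXpos xstar
    have key : PX xstar * Pstar xstar xstar / (∑ x', PX x' * Pstar x' xstar) / PX xstar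
        = (1 - exp ε * (1 - pmin)) / pmin := by
      rw [hb2 xstar, hx]
    refine ⟨key, ?_⟩
    rw [key, Real.log_div hpos.ne' hpminpos.ne', Real.log_div hpminpos.ne' hpos.ne']
    ring
end

section
/- (Upper-bound part of the operationalization theorem.) Let y ∈ 𝒴 with P_Y(y) > 0. Then for every finite nonempty set 𝒰 and every kernel P_{U|X}, ( min_{x∈𝒳} P_{X|Y=y}(x)/P_X(x) ) · ( 1 − max_{u∈𝒰} P_U(u) ) ≤ 1 − max_{u∈𝒰} P_{U|Y=y}(u). -/
open Finset Real

lemma aux_stmt_11 {𝒳 𝒰 : Type} [Fintype 𝒳] [Nonempty 𝒳] [Fintype 𝒰] [Nonempty 𝒰]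
    (PX post : 𝒳 → ℝ) (hPXpos : ∀ x, 0 < PX x) (hPXsum : ∑ x, PX x = 1)
    (hpostnn : ∀ x, 0 ≤ post x) (hpostsum : ∑ x, post x = 1)
    (Q : 𝒳 → 𝒰 → ℝ) (hQnn : ∀ x u, 0 ≤ Q x u) (hQsum : ∀ x, ∑ u, Q x u = 1) :
    Finset.univ.inf' Finset.univ_nonempty (fun x => post x / PX x) *
      (1 - Finset.univ.sup' Finset.univ_nonempty (fun u => ∑ x, Q x u * PX x)) ≤
    1 - Finset.univ.sup' Finset.univ_nonempty (fun u => ∑ x, Q x u * post x) := by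
  set m := Finset.univ.inf' Finset.univ_nonempty (fun x => post x / PX x) with hm
  have hmnn : 0 ≤ m := Finset.le_inf' _ _ (fun x _ => div_nonneg (hpostnn x) (hPXpos x).le)
  have hpostge : ∀ x, m * PX x ≤ post x := by
    intro x
    have h := Finset.inf'_le (b := x) (fun x => post x / PX x) (Finset.mem_univ x)
    rw [← hm] at h
    calc m * PX x ≤ (post x / PX x) * PX x := by nlinarith [hPXpos x]
      _ = post x := div_mul_cancel₀ _ (hPXpos x).ne'
  have hQle1 : ∀ x u, Q x u ≤ 1 := by
    intro x u
    calc Q x u ≤ ∑ u', Q x u' := Finset.single_le_sum (fun u' _ => hQnn x u') (Finset.mem_univ u)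
      _ = 1 := hQsum x
  obtain ⟨u₀, _, hu₀⟩ := Finset.exists_mem_eq_sup' (s := Finset.univ)
    Finset.univ_nonempty (fun u => ∑ x, Q x u * post x)
  rw [hu₀]
  have hsup : ∑ x, Q x u₀ * PX x ≤
      Finset.univ.sup' Finset.univ_nonempty (fun u => ∑ x, Q x u * PX x) :=
    Finset.le_sup' (fun u => ∑ x, Q x u * PX x) (Finset.mem_univ u₀)
  have key : m * (1 - ∑ x, Q x u₀ * PX x) ≤ 1 - ∑ x, Q x u₀ * post x := by
    have h1 : 1 - ∑ x, Q x u₀ * post x = ∑ x, (1 - Q x u₀) * post x := by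
      rw [Finset.sum_congr rfl (fun x _ => by ring :
        ∀ x ∈ Finset.univ, (1 - Q x u₀) * post x = post x - Q x u₀ * post x),
        Finset.sum_sub_distrib, hpostsum]
    have h2 : m * (1 - ∑ x, Q x u₀ * PX x) = ∑ x, (1 - Q x u₀) * (m * PX x) := by
      rw [Finset.sum_congr rfl (fun x _ => by ring :
        ∀ x ∈ Finset.univ, (1 - Q x u₀) * (m * PX x) = m * PX x - Q x u₀ * (m * PX x)),
        Finset.sum_sub_distrib]
      simp_rw [show ∀ x, Q x u₀ * (m * PX x) = m * (Q x u₀ * PX x) from fun x => by ring,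
        ← Finset.mul_sum, hPXsum]
      ring
    rw [h1, h2]
    apply Finset.sum_le_sum
    intro x _
    have := hpostge x
    have := hQle1 x u₀
    nlinarith
  nlinarith

/-- Upper-bound part of the operationalization theorem: for any randomized function `U` of
`X` (kernel `Q`), `(min_x P_{X|Y=y}(x)/P_X(x)) · (1 - max_u P_U(u)) ≤ 1 - max_u P_{U|Y=y}(u)`. -/
theorem stmt_11 {𝒳 𝒴 : Type} [Fintype 𝒳] [Nonempty 𝒳] [Fintype 𝒴] [Nonempty 𝒴]
    (PX : 𝒳 → ℝ) (hPXpos : ∀ x, 0 < PX x) (hPXsum : ∑ x, PX x = 1)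
    (K : 𝒳 → 𝒴 → ℝ) (hKnn : ∀ x y, 0 ≤ K x y) (hKsum : ∀ x, ∑ y, K x y = 1)
    (y : 𝒴) (hPY : 0 < ∑ x, PX x * K x y)
    (𝒰 : Type) [Fintype 𝒰] [Nonempty 𝒰]
    (Q : 𝒳 → 𝒰 → ℝ) (hQnn : ∀ x u, 0 ≤ Q x u) (hQsum : ∀ x, ∑ u, Q x u = 1) :
    Finset.univ.inf' Finset.univ_nonempty
        (fun x => (PX x * K x y / (∑ x', PX x' * K x' y)) / PX x) *
      (1 - Finset.univ.sup' Finset.univ_nonempty (fun u => ∑ x, Q x u * PX x)) ≤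
    1 - Finset.univ.sup' Finset.univ_nonempty
        (fun u => ∑ x, Q x u * (PX x * K x y / (∑ x', PX x' * K x' y))) := by
  have hS : (0:ℝ) < ∑ x', PX x' * K x' y := hPY
  apply aux_stmt_11 PX (fun x => PX x * K x y / (∑ x', PX x' * K x' y)) hPXpos hPXsum
    (fun x => div_nonneg (mul_nonneg (hPXpos x).le (hKnn x y)) hS.le)
    (by rw [← Finset.sum_div, div_self hS.ne'])
    Q hQnn hQsum
end

section
/- (Theorem 2, operationalization of the lower bound on information density.) Let y ∈ 𝒴 with P_Y(y) > 0 and let ε ≥ 0. Then P_{X|Y=y}(x) ≥ e^{−ε}·P_X(x) holds for all x ∈ 𝒳 if and only if for every finite nonempty set 𝒰 and every kernel P_{U|X} one has 1 − max_{u∈𝒰} P_U(u) ≤ e^{ε}·( 1 − max_{u∈𝒰} P_{U|Y=y}(u) ). -/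
open Finset Real

/-- Theorem 2 (operationalization of the lower bound on information density):
`P_{X|Y=y}(x) ≥ e^{-ε} P_X(x)` for all `x` iff for every randomized function `U` of `X`
(finite nonempty alphabet `𝒰`, kernel `Q`) the prior error probability of guessing `U` is at
most `e^ε` times the posterior error probability given `Y = y`. -/
theorem stmt_12 {𝒳 𝒴 : Type} [Fintype 𝒳] [Nonempty 𝒳] [Fintype 𝒴] [Nonempty 𝒴]
    (PX : 𝒳 → ℝ) (hPXpos : ∀ x, 0 < PX x) (hPXsum : ∑ x, PX x = 1)
    (K : 𝒳 → 𝒴 → ℝ) (hKnn : ∀ x y, 0 ≤ K x y) (hKsum : ∀ x, ∑ y, K x y = 1)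
    (y : 𝒴) (hPY : 0 < ∑ x, PX x * K x y)
    (ε : ℝ) (hε : 0 ≤ ε) :
    (∀ x, exp (-ε) * PX x ≤ PX x * K x y / (∑ x', PX x' * K x' y)) ↔
    (∀ (𝒰 : Type) (_ : Fintype 𝒰) (_ : Nonempty 𝒰) (Q : 𝒳 → 𝒰 → ℝ),
      (∀ x u, 0 ≤ Q x u) → (∀ x, ∑ u, Q x u = 1) →
      1 - Finset.univ.sup' Finset.univ_nonempty (fun u => ∑ x, Q x u * PX x) ≤
        exp ε * (1 - Finset.univ.sup' Finset.univ_nonempty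
          (fun u => ∑ x, Q x u * (PX x * K x y / (∑ x', PX x' * K x' y))))) := by
  classical
  have hSpos : 0 < ∑ x', PX x' * K x' y := hPY
  set q : 𝒳 → ℝ := fun x => PX x * K x y / (∑ x', PX x' * K x' y) with hqdef
  have hqnn : ∀ x, 0 ≤ q x := fun x =>
    div_nonneg (mul_nonneg (hPXpos x).le (hKnn x y)) hSpos.le
  have hqsum : ∑ x, q x = 1 := by
    simp only [hqdef]
    rw [← Finset.sum_div]
    exact div_self hSpos.ne'
  have hE : (0:ℝ) < exp ε := exp_pos ε
  constructor
  · intro h 𝒰 _ _ Q hQnn hQsum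
    set f : 𝒰 → ℝ := fun u => ∑ x, Q x u * PX x with hfdef
    set g : 𝒰 → ℝ := fun u => ∑ x, Q x u * q x with hgdef
    have hfsum : ∑ u, f u = 1 := by
      simp only [hfdef]
      rw [Finset.sum_comm]
      simp only [← Finset.sum_mul, hQsum, one_mul, hPXsum]
    have hgsum : ∑ u, g u = 1 := by
      simp only [hgdef]
      rw [Finset.sum_comm]
      simp only [← Finset.sum_mul, hQsum, one_mul, hqsum]
    have hfg : ∀ u, f u ≤ exp ε * g u := by
      intro u
      simp only [hfdef, hgdef, Finset.mul_sum]
      apply Finset.sum_le_sum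
      intro x _
      have h1 : exp (-ε) * PX x ≤ q x := h x
      have h2 : PX x ≤ exp ε * q x := by
        rw [exp_neg] at h1
        have := mul_le_mul_of_nonneg_left h1 hE.le
        rwa [← mul_assoc, mul_inv_cancel₀ hE.ne', one_mul] at this
      calc Q x u * PX x ≤ Q x u * (exp ε * q x) :=
            mul_le_mul_of_nonneg_left h2 (hQnn x u)
        _ = exp ε * (Q x u * q x) := by ring
    obtain ⟨ug, -, hug⟩ := Finset.exists_mem_eq_sup' Finset.univ_nonempty g
    have hfsup : f ug ≤ Finset.univ.sup' Finset.univ_nonempty f :=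
      Finset.le_sup' f (Finset.mem_univ ug)
    have herase_g : ∑ u ∈ Finset.univ.erase ug, g u = 1 - g ug := by
      have := Finset.sum_erase_add Finset.univ g (Finset.mem_univ ug)
      linarith [hgsum, this]
    have herase_f : ∑ u ∈ Finset.univ.erase ug, f u = 1 - f ug := by
      have := Finset.sum_erase_add Finset.univ f (Finset.mem_univ ug)
      linarith [hfsum, this]
    have hle : ∑ u ∈ Finset.univ.erase ug, f u ≤
        exp ε * ∑ u ∈ Finset.univ.erase ug, g u := by
      rw [Finset.mul_sum]
      exact Finset.sum_le_sum fun u _ => hfg u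
    have : 1 - f ug ≤ exp ε * (1 - g ug) := by
      rw [← herase_f, ← herase_g]; exact hle
    calc 1 - Finset.univ.sup' Finset.univ_nonempty f ≤ 1 - f ug := by linarith
      _ ≤ exp ε * (1 - g ug) := this
      _ = exp ε * (1 - Finset.univ.sup' Finset.univ_nonempty g) := by rw [hug]
  · intro h x0
    set Q : 𝒳 → Bool → ℝ := fun x u =>
      if x = x0 then 1/2 else (if u then 1 else 0) with hQdef
    have hQnn : ∀ x u, 0 ≤ Q x u := by
      intro x u
      simp only [hQdef]
      split_ifs <;> simp_all <;> norm_num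
    have hQsum : ∀ x, ∑ u, Q x u = 1 := by
      intro x
      by_cases hx : x = x0 <;> simp [hQdef, hx, Fintype.sum_bool] <;> norm_num
    have key := h Bool inferInstance inferInstance Q hQnn hQsum
    set f : Bool → ℝ := fun u => ∑ x, Q x u * PX x with hfdef
    set g : Bool → ℝ := fun u => ∑ x, Q x u * q x with hgdef
    have hfF : f false = PX x0 / 2 := by
      simp only [hfdef, hQdef]
      simp [ite_mul, Finset.sum_ite_eq']
      ring
    have hgF : g false = q x0 / 2 := by
      simp only [hgdef, hQdef]
      simp [ite_mul, Finset.sum_ite_eq']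
      ring
    have hfFT : f false + f true = 1 := by
      simp only [hfdef]
      rw [← Finset.sum_add_distrib]
      rw [← hPXsum]
      apply Finset.sum_congr rfl
      intro x _
      have : Q x false + Q x true = 1 := by
        by_cases hx : x = x0 <;> simp [hQdef, hx] <;> norm_num
      rw [← add_mul, this, one_mul]
    have hgFT : g false + g true = 1 := by
      simp only [hgdef]
      rw [← Finset.sum_add_distrib]
      rw [← hqsum]
      apply Finset.sum_congr rfl
      intro x _
      have : Q x false + Q x true = 1 := by
        by_cases hx : x = x0 <;> simp [hQdef, hx] <;> norm_num
      rw [← add_mul, this, one_mul]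
    have hp0 : PX x0 ≤ 1 := by
      rw [← hPXsum]
      exact Finset.single_le_sum (fun x _ => (hPXpos x).le) (Finset.mem_univ x0)
    have hfle : f false ≤ f true := by
      rw [hfF]; nlinarith [hPXpos x0]
    have hsupf : Finset.univ.sup' Finset.univ_nonempty f = f true := by
      apply le_antisymm
      · exact Finset.sup'_le _ _ (fun b _ => by cases b <;> simp [hfle])
      · exact Finset.le_sup' f (Finset.mem_univ true)
    have hsupg : g true ≤ Finset.univ.sup' Finset.univ_nonempty g :=
      Finset.le_sup' g (Finset.mem_univ true)
    rw [hsupf] at key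
    have h1 : PX x0 / 2 ≤ exp ε * (q x0 / 2) := by
      have hlhs : 1 - f true = PX x0 / 2 := by linarith
      have hrhs : 1 - Finset.univ.sup' Finset.univ_nonempty g ≤ q x0 / 2 := by
        linarith
      calc PX x0 / 2 = 1 - f true := hlhs.symm
        _ ≤ exp ε * (1 - Finset.univ.sup' Finset.univ_nonempty g) := key
        _ ≤ exp ε * (q x0 / 2) := mul_le_mul_of_nonneg_left hrhs hE.le
    have : PX x0 ≤ exp ε * q x0 := by linarith
    rw [exp_neg]
    rw [inv_mul_le_iff₀ hE]
    exact this
end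

section
/- (Theorem 3, second direction.) Let y ∈ 𝒴 with P_Y(y) > 0. For every finite nonempty set 𝒲 and every cost function c : 𝒳 × 𝒲 → ℝ≥0 with min_{w∈𝒲} ∑_x c(x,w)·P_X(x) > 0, there exist a finite nonempty set 𝒰 and a kernel P_{U|X} such that max_{u∈𝒰} P_U(u) < 1 and ( 1 − max_{u∈𝒰} P_U(u) ) · min_{w∈𝒲} ∑_x c(x,w)·P_{X|Y=y}(x) = ( 1 − max_{u∈𝒰} P_{U|Y=y}(u) ) · min_{w∈𝒲} ∑_x c(x,w)·P_X(x). (In particular, when min_w ∑_x c(x,w)·P_{X|Y=y}(x) = 0, the constructed U satisfies max_u P_{U|Y=y}(u) = 1, so both leakages are infinite.) -/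
open Finset Real

lemma sup'_bool_eq (h : Bool → ℝ) :
    Finset.univ.sup' Finset.univ_nonempty h = max (h true) (h false) := by
  apply le_antisymm
  · exact Finset.sup'_le _ _ (fun b _ => by cases b <;> simp [le_max_left, le_max_right])
  · exact max_le (Finset.le_sup' h (Finset.mem_univ true))
      (Finset.le_sup' h (Finset.mem_univ false))

set_option maxHeartbeats 1000000 in
/-- Theorem 3, second direction: for every nonnegative cost function `c` with positive
minimal prior expected cost, there exists a randomized function `U` of `X` (with
`max_u P_U(u) < 1`) whose guessing-leakage ratio equals the cost-leakage ratio of `c`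
(stated in cross-multiplied form). -/
theorem stmt_14 {𝒳 𝒴 : Type} [Fintype 𝒳] [Nonempty 𝒳] [Fintype 𝒴] [Nonempty 𝒴]
    (PX : 𝒳 → ℝ) (hPXpos : ∀ x, 0 < PX x) (hPXsum : ∑ x, PX x = 1)
    (K : 𝒳 → 𝒴 → ℝ) (hKnn : ∀ x y, 0 ≤ K x y) (hKsum : ∀ x, ∑ y, K x y = 1)
    (y : 𝒴) (hPY : 0 < ∑ x, PX x * K x y)
    (𝒲 : Type) [Fintype 𝒲] [Nonempty 𝒲]
    (c : 𝒳 → 𝒲 → ℝ) (hcnn : ∀ x w, 0 ≤ c x w)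
    (hcpos : 0 < Finset.univ.inf' Finset.univ_nonempty (fun w => ∑ x, c x w * PX x)) :
    ∃ (𝒰 : Type) (_ : Fintype 𝒰) (_ : Nonempty 𝒰) (Q : 𝒳 → 𝒰 → ℝ),
      (∀ x u, 0 ≤ Q x u) ∧ (∀ x, ∑ u, Q x u = 1) ∧
      Finset.univ.sup' Finset.univ_nonempty (fun u => ∑ x, Q x u * PX x) < 1 ∧
      (1 - Finset.univ.sup' Finset.univ_nonempty (fun u => ∑ x, Q x u * PX x)) *
          Finset.univ.inf' Finset.univ_nonempty
            (fun w => ∑ x, c x w * (PX x * K x y / (∑ x', PX x' * K x' y))) =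
        (1 - Finset.univ.sup' Finset.univ_nonempty
            (fun u => ∑ x, Q x u * (PX x * K x y / (∑ x', PX x' * K x' y)))) *
          Finset.univ.inf' Finset.univ_nonempty (fun w => ∑ x, c x w * PX x) := by
  classical
  obtain ⟨P', hP'x⟩ : ∃ P' : 𝒳 → ℝ,
      ∀ x, PX x * K x y / (∑ x', PX x' * K x' y) = P' x :=
    ⟨fun x => PX x * K x y / (∑ x', PX x' * K x' y), fun x => rfl⟩
  simp only [hP'x]
  have hP'nn : ∀ x, 0 ≤ P' x := fun x => by
    rw [← hP'x]
    exact div_nonneg (mul_nonneg (hPXpos x).le (hKnn x y)) hPY.le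
  have hP'sum : ∑ x, P' x = 1 := by
    rw [show (∑ x, P' x) = ∑ x, PX x * K x y / (∑ x', PX x' * K x' y) from
      Finset.sum_congr rfl fun x _ => (hP'x x).symm, ← Finset.sum_div]
    exact div_self hPY.ne'
  -- minimizers
  obtain ⟨w0, -, hw0⟩ := Finset.exists_mem_eq_inf' (Finset.univ_nonempty (α := 𝒲))
    (fun w => ∑ x, c x w * PX x)
  obtain ⟨w1, -, hw1⟩ := Finset.exists_mem_eq_inf' (Finset.univ_nonempty (α := 𝒲))
    (fun w => ∑ x, c x w * P' x)
  obtain ⟨A, hAdef⟩ : ∃ A : ℝ,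
      A = Finset.univ.inf' Finset.univ_nonempty (fun w => ∑ x, c x w * PX x) := ⟨_, rfl⟩
  obtain ⟨B, hBdef⟩ : ∃ B : ℝ,
      B = Finset.univ.inf' Finset.univ_nonempty (fun w => ∑ x, c x w * P' x) := ⟨_, rfl⟩
  rw [← hAdef, ← hBdef]
  have hApos : 0 < A := hAdef ▸ hcpos
  have hwA : A = ∑ x, c x w0 * PX x := by rw [hAdef, hw0]
  have hwB : B = ∑ x, c x w1 * P' x := by rw [hBdef, hw1]
  have hBnn : 0 ≤ B := by
    rw [hwB]
    exact Finset.sum_nonneg fun x _ => mul_nonneg (hcnn x w1) (hP'nn x)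
  have hAA1 : A ≤ ∑ x, c x w1 * PX x := hAdef ▸ Finset.inf'_le _ (Finset.mem_univ w1)
  have hBB0 : B ≤ ∑ x, c x w0 * P' x := hBdef ▸ Finset.inf'_le _ (Finset.mem_univ w0)
  obtain ⟨A1, hA1⟩ : ∃ A1 : ℝ, A1 = ∑ x, c x w1 * PX x := ⟨_, rfl⟩
  obtain ⟨B0, hB0⟩ : ∃ B0 : ℝ, B0 = ∑ x, c x w0 * P' x := ⟨_, rfl⟩
  rw [← hA1] at hAA1
  rw [← hB0] at hBB0
  -- choose θ ∈ [0,1] with (1-θ)·B·(A1-A) = θ·A·(B0-B)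
  obtain ⟨θ, hθ0, hθ1, hkey⟩ : ∃ θ : ℝ, 0 ≤ θ ∧ θ ≤ 1 ∧
      (1 - θ) * (B * (A1 - A)) = θ * (A * (B0 - B)) := by
    have hpnn : 0 ≤ B * (A1 - A) := mul_nonneg hBnn (by linarith)
    have hrnn : 0 ≤ A * (B0 - B) := mul_nonneg hApos.le (by linarith)
    by_cases h : B * (A1 - A) + A * (B0 - B) = 0
    · exact ⟨0, le_refl 0, by norm_num, by nlinarith⟩
    · have hpr : 0 < B * (A1 - A) + A * (B0 - B) := lt_of_le_of_ne (by linarith) (Ne.symm h)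
      refine ⟨B * (A1 - A) / (B * (A1 - A) + A * (B0 - B)),
        div_nonneg hpnn hpr.le, ?_, ?_⟩
      · rw [div_le_one hpr]; linarith
      · field_simp
        ring
  -- the function f
  obtain ⟨f, hf⟩ : ∃ f : 𝒳 → ℝ, ∀ x, f x = θ * c x w0 + (1 - θ) * c x w1 :=
    ⟨fun x => θ * c x w0 + (1 - θ) * c x w1, fun x => rfl⟩
  have hfnn : ∀ x, 0 ≤ f x := fun x => by
    rw [hf x]
    exact add_nonneg (mul_nonneg hθ0 (hcnn x w0)) (mul_nonneg (by linarith) (hcnn x w1))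
  have hEP : ∑ x, f x * PX x = θ * A + (1 - θ) * A1 := by
    rw [hwA, hA1, Finset.mul_sum, Finset.mul_sum, ← Finset.sum_add_distrib]
    exact Finset.sum_congr rfl fun x _ => by rw [hf x]; ring
  have hEQ : ∑ x, f x * P' x = θ * B0 + (1 - θ) * B := by
    rw [hwB, hB0, Finset.mul_sum, Finset.mul_sum, ← Finset.sum_add_distrib]
    exact Finset.sum_congr rfl fun x _ => by rw [hf x]; ring
  have hEPpos : 0 < ∑ x, f x * PX x := by rw [hEP]; nlinarith
  have hcross : (∑ x, f x * PX x) * B = (∑ x, f x * P' x) * A := by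
    rw [hEP, hEQ]; nlinarith [hkey]
  -- scaling
  obtain ⟨F, hF⟩ : ∃ F : ℝ, F = ∑ x, f x := ⟨_, rfl⟩
  have hFnn : 0 ≤ F := hF ▸ Finset.sum_nonneg fun x _ => hfnn x
  have hfF : ∀ x, f x ≤ F :=
    fun x => hF ▸ Finset.single_le_sum (fun i _ => hfnn i) (Finset.mem_univ x)
  obtain ⟨ε, hε⟩ : ∃ ε : ℝ, ε = 1 / (2 * (F + 1)) := ⟨_, rfl⟩
  have hεpos : 0 < ε := by rw [hε]; positivity
  have hεF : ε * F ≤ 1 / 2 := by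
    rw [hε, div_mul_eq_mul_div, one_mul, div_le_div_iff₀ (by positivity) (by norm_num)]
    linarith
  have hεf : ∀ x, ε * f x ≤ 1 / 2 := fun x => by
    have h1 : ε * f x ≤ ε * F := mul_le_mul_of_nonneg_left (hfF x) hεpos.le
    linarith
  -- the kernel
  obtain ⟨Q, hQt, hQf⟩ : ∃ Q : 𝒳 → Bool → ℝ,
      (∀ x, Q x true = ε * f x) ∧ (∀ x, Q x false = 1 - ε * f x) :=
    ⟨fun x u => if u then ε * f x else 1 - ε * f x, fun x => rfl, fun x => rfl⟩
  -- the two sup's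
  have hm0 : ∑ x, Q x true * PX x = ε * ∑ x, f x * PX x := by
    rw [Finset.mul_sum]
    exact Finset.sum_congr rfl fun x _ => by rw [hQt x]; ring
  have hm0' : ∑ x, Q x false * PX x = 1 - ε * ∑ x, f x * PX x := by
    rw [show (∑ x, Q x false * PX x) = ∑ x, (PX x - ε * (f x * PX x)) from
      Finset.sum_congr rfl fun x _ => by rw [hQf x]; ring,
      Finset.sum_sub_distrib, hPXsum, ← Finset.mul_sum]
  have hm1 : ∑ x, Q x true * P' x = ε * ∑ x, f x * P' x := by
    rw [Finset.mul_sum]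
    exact Finset.sum_congr rfl fun x _ => by rw [hQt x]; ring
  have hm1' : ∑ x, Q x false * P' x = 1 - ε * ∑ x, f x * P' x := by
    rw [show (∑ x, Q x false * P' x) = ∑ x, (P' x - ε * (f x * P' x)) from
      Finset.sum_congr rfl fun x _ => by rw [hQf x]; ring,
      Finset.sum_sub_distrib, hP'sum, ← Finset.mul_sum]
  have hm0half : ε * ∑ x, f x * PX x ≤ 1 / 2 := by
    have h1 : ∑ x, f x * PX x ≤ F := by
      rw [hF]
      refine Finset.sum_le_sum fun x _ => ?_
      have hx1 : PX x ≤ 1 := by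
        rw [← hPXsum]
        exact Finset.single_le_sum (fun i _ => (hPXpos i).le) (Finset.mem_univ x)
      nlinarith [hfnn x]
    have h2 : ε * ∑ x, f x * PX x ≤ ε * F := mul_le_mul_of_nonneg_left h1 hεpos.le
    linarith
  have hm1half : ε * ∑ x, f x * P' x ≤ 1 / 2 := by
    have h1 : ∑ x, f x * P' x ≤ F := by
      rw [hF]
      refine Finset.sum_le_sum fun x _ => ?_
      have hx1 : P' x ≤ 1 := by
        rw [← hP'sum]
        exact Finset.single_le_sum (fun i _ => hP'nn i) (Finset.mem_univ x)
      nlinarith [hfnn x]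
    have h2 : ε * ∑ x, f x * P' x ≤ ε * F := mul_le_mul_of_nonneg_left h1 hεpos.le
    linarith
  have hsup0 : Finset.univ.sup' Finset.univ_nonempty
      (fun u : Bool => ∑ x, Q x u * PX x) = 1 - ε * ∑ x, f x * PX x := by
    rw [sup'_bool_eq, hm0, hm0', max_eq_right (by linarith)]
  have hsup1 : Finset.univ.sup' Finset.univ_nonempty
      (fun u : Bool => ∑ x, Q x u * P' x) = 1 - ε * ∑ x, f x * P' x := by
    rw [sup'_bool_eq, hm1, hm1', max_eq_right (by linarith)]
  refine ⟨Bool, inferInstance, inferInstance, Q, ?_, ?_, ?_, ?_⟩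
  · intro x u
    cases u
    · rw [hQf x]; have := hεf x; linarith
    · rw [hQt x]; exact mul_nonneg hεpos.le (hfnn x)
  · intro x
    rw [Fintype.sum_bool, hQt x, hQf x]; ring
  · rw [hsup0]
    nlinarith [mul_pos hεpos hEPpos]
  · rw [hsup0, hsup1]
    nlinarith [hcross]
end

section
/- (Cost-function leakage is bounded by the maximal inverse information density.) Let y ∈ 𝒴 with P_Y(y) > 0. For every finite nonempty set 𝒲 and every cost function c : 𝒳 × 𝒲 → ℝ≥0, ( min_{x∈𝒳} P_{X|Y=y}(x)/P_X(x) ) · min_{w∈𝒲} ∑_x c(x,w)·P_X(x) ≤ min_{w∈𝒲} ∑_x c(x,w)·P_{X|Y=y}(x). -/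
open Finset Real

/-!
Writing `q` for the posterior and `p` for the prior, the minimal ratio `m = min_x q x / p x`
satisfies `m * p x ≤ q x` pointwise. Against a nonnegative cost this gives
`m * E_p[c(X, w)] ≤ E_q[c(X, w)]` for each `w`, and the minimum over `w` is then monotone.
-/

namespace Finset

variable {ι R : Type*} {s : Finset ι}

theorem mul_inf'_le_inf' [Semiring R] [LinearOrder R] [IsOrderedRing R] (hs : s.Nonempty)
    {a : R} (ha : 0 ≤ a) {f g : ι → R} (h : ∀ i ∈ s, a * f i ≤ g i) :
    a * s.inf' hs f ≤ s.inf' hs g :=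
  le_inf' hs g fun i hi => (mul_le_mul_of_nonneg_left (inf'_le f hi) ha).trans (h i hi)

theorem mul_sum_mul_le_sum_mul [CommSemiring R] [PartialOrder R] [IsOrderedRing R]
    {a : R} {c p q : ι → R} (hc : ∀ i ∈ s, 0 ≤ c i) (h : ∀ i ∈ s, a * p i ≤ q i) :
    a * ∑ i ∈ s, c i * p i ≤ ∑ i ∈ s, c i * q i := by
  rw [mul_sum]
  refine sum_le_sum fun i hi => ?_
  calc a * (c i * p i) = c i * (a * p i) := by ring
    _ ≤ c i * q i := mul_le_mul_of_nonneg_left (h i hi) (hc i hi)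

theorem inf'_div_mul_le [Field R] [LinearOrder R] [IsStrictOrderedRing R] (hs : s.Nonempty)
    {p q : ι → R} {i : ι} (hi : i ∈ s) (hp : 0 < p i) :
    s.inf' hs (fun j => q j / p j) * p i ≤ q i :=
  calc s.inf' hs (fun j => q j / p j) * p i ≤ q i / p i * p i :=
        mul_le_mul_of_nonneg_right (inf'_le (fun j => q j / p j) hi) hp.le
    _ = q i := div_mul_cancel₀ _ hp.ne'

end Finset

theorem stmt_15_general {𝒳 𝒴 : Type} [Fintype 𝒳] [Nonempty 𝒳]
    (PX : 𝒳 → ℝ) (hPXpos : ∀ x, 0 < PX x)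
    (K : 𝒳 → 𝒴 → ℝ) (hKnn : ∀ x y, 0 ≤ K x y)
    (y : 𝒴)
    (𝒲 : Type) [Fintype 𝒲] [Nonempty 𝒲]
    (c : 𝒳 → 𝒲 → ℝ) (hcnn : ∀ x w, 0 ≤ c x w) :
    Finset.univ.inf' Finset.univ_nonempty
        (fun x => (PX x * K x y / (∑ x', PX x' * K x' y)) / PX x) *
      Finset.univ.inf' Finset.univ_nonempty (fun w => ∑ x, c x w * PX x) ≤
    Finset.univ.inf' Finset.univ_nonempty
      (fun w => ∑ x, c x w * (PX x * K x y / (∑ x', PX x' * K x' y))) := by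
  set q : 𝒳 → ℝ := fun x => PX x * K x y / ∑ x', PX x' * K x' y
  have hq_nonneg : ∀ x, 0 ≤ q x := fun x =>
    div_nonneg (mul_nonneg (hPXpos x).le (hKnn x y))
      (sum_nonneg fun x' _ => mul_nonneg (hPXpos x').le (hKnn x' y))
  have hratio_nonneg : 0 ≤ univ.inf' univ_nonempty fun x => q x / PX x :=
    le_inf' _ _ fun x _ => div_nonneg (hq_nonneg x) (hPXpos x).le
  exact mul_inf'_le_inf' _ hratio_nonneg fun w _ =>
    mul_sum_mul_le_sum_mul (fun x _ => hcnn x w) fun x hx =>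
      inf'_div_mul_le univ_nonempty hx (hPXpos x)

/-- Cost-function leakage is bounded by the maximal inverse information density:
`(min_x P_{X|Y=y}(x)/P_X(x)) · min_w E[c(X,w)] ≤ min_w E[c(X,w) | Y=y]`. -/
theorem stmt_15 {𝒳 𝒴 : Type} [Fintype 𝒳] [Nonempty 𝒳] [Fintype 𝒴] [Nonempty 𝒴]
    (PX : 𝒳 → ℝ) (hPXpos : ∀ x, 0 < PX x) (hPXsum : ∑ x, PX x = 1)
    (K : 𝒳 → 𝒴 → ℝ) (hKnn : ∀ x y, 0 ≤ K x y) (hKsum : ∀ x, ∑ y, K x y = 1)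
    (y : 𝒴) (hPY : 0 < ∑ x, PX x * K x y)
    (𝒲 : Type) [Fintype 𝒲] [Nonempty 𝒲]
    (c : 𝒳 → 𝒲 → ℝ) (hcnn : ∀ x w, 0 ≤ c x w) :
    Finset.univ.inf' Finset.univ_nonempty
        (fun x => (PX x * K x y / (∑ x', PX x' * K x' y)) / PX x) *
      Finset.univ.inf' Finset.univ_nonempty (fun w => ∑ x, c x w * PX x) ≤
    Finset.univ.inf' Finset.univ_nonempty
      (fun w => ∑ x, c x w * (PX x * K x y / (∑ x', PX x' * K x' y))) :=
  stmt_15_general PX hPXpos K hKnn y 𝒲 c hcnn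
end

section
/- (Closedness under pre-processing.) Let y ∈ 𝒴 with P_Y(y) > 0, and let 𝒰 be a finite nonempty set with kernel P_{U|X} (so that U − X − Y is a Markov chain). Then for every u ∈ 𝒰, P_{U|Y=y}(u) ≥ ( min_{x∈𝒳} P_{X|Y=y}(x)/P_X(x) ) · P_U(u); consequently max_{u: P_{U|Y=y}(u)>0} P_U(u)/P_{U|Y=y}(u) ≤ max_{x∈𝒳} P_X(x)/P_{X|Y=y}(x) whenever all posteriors P_{X|Y=y}(x) are positive. -/
open Finset Real

/-- Closedness under pre-processing: for any randomized function `U` of `X`,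
`P_{U|Y=y}(u) ≥ (min_x P_{X|Y=y}(x)/P_X(x)) · P_U(u)` for every `u`; consequently, when all
posteriors are positive, `max_{u : P_{U|Y=y}(u) > 0} P_U(u)/P_{U|Y=y}(u) ≤
max_x P_X(x)/P_{X|Y=y}(x)`. -/
theorem stmt_16 {𝒳 𝒴 : Type} [Fintype 𝒳] [Nonempty 𝒳] [Fintype 𝒴] [Nonempty 𝒴]
    (PX : 𝒳 → ℝ) (hPXpos : ∀ x, 0 < PX x) (hPXsum : ∑ x, PX x = 1)
    (K : 𝒳 → 𝒴 → ℝ) (hKnn : ∀ x y, 0 ≤ K x y) (hKsum : ∀ x, ∑ y, K x y = 1)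
    (y : 𝒴) (hPY : 0 < ∑ x, PX x * K x y)
    (𝒰 : Type) [Fintype 𝒰] [Nonempty 𝒰]
    (Q : 𝒳 → 𝒰 → ℝ) (hQnn : ∀ x u, 0 ≤ Q x u) (hQsum : ∀ x, ∑ u, Q x u = 1) :
    (∀ u, Finset.univ.inf' Finset.univ_nonempty
          (fun x => (PX x * K x y / (∑ x', PX x' * K x' y)) / PX x) *
        (∑ x, Q x u * PX x) ≤
      ∑ x, Q x u * (PX x * K x y / (∑ x', PX x' * K x' y))) ∧
    ((∀ x, 0 < PX x * K x y / (∑ x', PX x' * K x' y)) →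
      ∀ u, 0 < (∑ x, Q x u * (PX x * K x y / (∑ x', PX x' * K x' y))) →
        (∑ x, Q x u * PX x) /
            (∑ x, Q x u * (PX x * K x y / (∑ x', PX x' * K x' y))) ≤
          Finset.univ.sup' Finset.univ_nonempty
            (fun x => PX x / (PX x * K x y / (∑ x', PX x' * K x' y)))) := by
  set post : 𝒳 → ℝ := fun x => PX x * K x y / (∑ x', PX x' * K x' y) with hpost
  constructor
  · intro u
    set m := Finset.univ.inf' Finset.univ_nonempty (fun x => post x / PX x) with hm
    rw [Finset.mul_sum]
    apply Finset.sum_le_sum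
    intro x _
    have hmle : m ≤ post x / PX x := Finset.inf'_le _ (Finset.mem_univ x)
    have : m * PX x ≤ post x := by
      rw [div_eq_mul_inv] at hmle
      have := mul_le_mul_of_nonneg_right hmle (hPXpos x).le
      rwa [mul_assoc, inv_mul_cancel₀ (hPXpos x).ne', mul_one] at this
    calc m * (Q x u * PX x) = Q x u * m * PX x := by ring
      _ ≤ Q x u * post x := by
          rw [mul_assoc]
          exact mul_le_mul_of_nonneg_left this (hQnn x u)
  · intro hpos u hu
    set M := Finset.univ.sup' Finset.univ_nonempty (fun x => PX x / post x) with hM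
    rw [div_le_iff₀ hu]
    have key : ∀ x, PX x ≤ M * post x := by
      intro x
      have hle : PX x / post x ≤ M := by
        rw [hM]; exact Finset.le_sup' (fun x => PX x / post x) (Finset.mem_univ x)
      have := mul_le_mul_of_nonneg_right hle (hpos x).le
      rwa [div_mul_cancel₀ _ (hpos x).ne'] at this
    calc ∑ x, Q x u * PX x ≤ ∑ x, Q x u * (M * post x) :=
          Finset.sum_le_sum fun x _ => mul_le_mul_of_nonneg_left (key x) (hQnn x u)
      _ = M * ∑ x, Q x u * post x := by rw [Finset.mul_sum]; congr 1; ext x; ring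
end

section
/- (Maximal realizable cost equals the worst-case maximal inverse information density; the supremum over randomized functions is superfluous.) Assume P_{Y|X=x}(y) > 0 for all x ∈ 𝒳, y ∈ 𝒴. Then the supremum, over all finite nonempty sets 𝒰, kernels P_{U|X}, finite nonempty sets Û, and cost functions c : 𝒰 × Û → ℝ≥0 with min_{û∈Û} ∑_u c(u,û)·P_U(u) > 0, of log( min_{û∈Û} ∑_u c(u,û)·P_U(u) / min_{y∈𝒴} min_{û∈Û} ∑_u c(u,û)·P_{U|Y=y}(u) ), equals max_{y∈𝒴} max_{x∈𝒳} log( P_X(x) / P_{X|Y=y}(x) ). -/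
open Finset Real

/-!
The posterior `P_{X|Y=y}` dominates `m · P_X` with `m = min_x P_{X|Y=y}(x) / P_X(x)`, so for
every kernel and cost the minimal posterior expected cost is at least `m` times the minimal prior
expected cost, and the log-ratio is at most `log (1 / m)`, an inverse information density.
The bound is attained by `U = X`, a single estimate, and the indicator cost `c(u, û) = [u = x]`
of a maximizing `x`, for which the two minimal costs are `P_X(x)` and `min_y P_{X|Y=y}(x)`.
-/

theorem log_div_le_log_div_inf' {ι : Type*} [Fintype ι] [Nonempty ι] {g : ι → ℝ} {a : ℝ}
    (ha : 0 < a) (hg : ∀ i, 0 < g i) (i : ι) :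
    log (a / g i) ≤ log (a / univ.inf' univ_nonempty g) := by
  have hinf : 0 < univ.inf' univ_nonempty g := (lt_inf'_iff _).mpr fun i _ => hg i
  exact log_le_log (div_pos ha (hg i))
    (div_le_div_of_nonneg_left ha.le hinf (inf'_le _ (mem_univ i)))

section

variable {𝒳 𝒴 𝒰 Û : Type*} [Fintype 𝒳] [Fintype 𝒰] [Fintype Û] [Nonempty Û]

noncomputable def minExpectedCost (Q : 𝒳 → 𝒰 → ℝ) (c : 𝒰 → Û → ℝ) (w : 𝒳 → ℝ) : ℝ :=
  univ.inf' univ_nonempty fun uh => ∑ u, c u uh * ∑ x, Q x u * w x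

noncomputable def posterior (PX : 𝒳 → ℝ) (K : 𝒳 → 𝒴 → ℝ) (y : 𝒴) (x : 𝒳) : ℝ :=
  PX x * K x y / ∑ x', PX x' * K x' y

theorem posterior_pos [Nonempty 𝒳] {PX : 𝒳 → ℝ} {K : 𝒳 → 𝒴 → ℝ} (hPX : ∀ x, 0 < PX x)
    (hK : ∀ x y, 0 < K x y) (y : 𝒴) (x : 𝒳) : 0 < posterior PX K y x :=
  div_pos (mul_pos (hPX x) (hK x y))
    (sum_pos (fun x' _ => mul_pos (hPX x') (hK x' y)) univ_nonempty)

theorem mul_minExpectedCost_le {Q : 𝒳 → 𝒰 → ℝ} {c : 𝒰 → Û → ℝ} {w v : 𝒳 → ℝ} {m : ℝ}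
    (hQ : ∀ x u, 0 ≤ Q x u) (hc : ∀ u uh, 0 ≤ c u uh) (hm : 0 ≤ m)
    (hwv : ∀ x, m * w x ≤ v x) :
    m * minExpectedCost Q c w ≤ minExpectedCost Q c v := by
  refine le_inf' _ _ fun uh _ => ?_
  calc m * minExpectedCost Q c w
      ≤ m * ∑ u, c u uh * ∑ x, Q x u * w x :=
        mul_le_mul_of_nonneg_left (inf'_le _ (mem_univ uh)) hm
    _ = ∑ u, c u uh * ∑ x, Q x u * (m * w x) := by
        simp only [mul_sum, mul_left_comm m]
    _ ≤ ∑ u, c u uh * ∑ x, Q x u * v x := by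
        gcongr with u _ x _
        exacts [hc u uh, hQ x u, hwv x]

theorem exists_log_minExpectedCost_div_le [Nonempty 𝒳] {Q : 𝒳 → 𝒰 → ℝ} {c : 𝒰 → Û → ℝ}
    {w v : 𝒳 → ℝ} (hQ : ∀ x u, 0 ≤ Q x u) (hc : ∀ u uh, 0 ≤ c u uh) (hw : ∀ x, 0 < w x)
    (hv : ∀ x, 0 < v x) (hA : 0 < minExpectedCost Q c w) :
    ∃ x, log (minExpectedCost Q c w / minExpectedCost Q c v) ≤ log (w x / v x) := by
  obtain ⟨x₀, -, hx₀⟩ := exists_min_image univ (fun x => v x / w x) univ_nonempty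
  set m := v x₀ / w x₀
  have hm : 0 < m := div_pos (hv x₀) (hw x₀)
  have hmA : m * minExpectedCost Q c w ≤ minExpectedCost Q c v :=
    mul_minExpectedCost_le hQ hc hm.le fun x =>
      (le_div_iff₀ (hw x)).mp (hx₀ x (mem_univ x))
  refine ⟨x₀, log_le_log (div_pos hA ((mul_pos hm hA).trans_le hmA)) ?_⟩
  calc minExpectedCost Q c w / minExpectedCost Q c v
      ≤ minExpectedCost Q c w / (m * minExpectedCost Q c w) :=
        div_le_div_of_nonneg_left hA.le (mul_pos hm hA) hmA
    _ = w x₀ / v x₀ := by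
        rw [mul_comm, ← div_div, div_self hA.ne', one_div, inv_div]

theorem minExpectedCost_indicator [DecidableEq 𝒳] (w : 𝒳 → ℝ) (x₁ : 𝒳) :
    minExpectedCost (Û := PUnit) (fun x u => if u = x then 1 else 0)
      (fun u _ => if u = x₁ then 1 else 0) w = w x₁ := by
  simp [minExpectedCost, ite_mul]

end

theorem stmt_17_general {𝒳 𝒴 : Type} [Fintype 𝒳] [Nonempty 𝒳] [Fintype 𝒴] [Nonempty 𝒴]
    (PX : 𝒳 → ℝ) (hPXpos : ∀ x, 0 < PX x)
    (K : 𝒳 → 𝒴 → ℝ) (hKpos : ∀ x y, 0 < K x y) :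
    IsLUB
      { r : ℝ |
        ∃ (𝒰 : Type) (_ : Fintype 𝒰) (_ : Nonempty 𝒰) (Q : 𝒳 → 𝒰 → ℝ)
          (Uhat : Type) (_ : Fintype Uhat) (_ : Nonempty Uhat) (c : 𝒰 → Uhat → ℝ),
          (∀ x u, 0 ≤ Q x u) ∧ (∀ x, ∑ u, Q x u = 1) ∧ (∀ u uh, 0 ≤ c u uh) ∧
          (0 < Finset.univ.inf' Finset.univ_nonempty
            (fun uh => ∑ u, c u uh * (∑ x, Q x u * PX x))) ∧
          r = log
            (Finset.univ.inf' Finset.univ_nonempty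
                (fun uh => ∑ u, c u uh * (∑ x, Q x u * PX x)) /
              Finset.univ.inf' Finset.univ_nonempty
                (fun y => Finset.univ.inf' Finset.univ_nonempty
                  (fun uh => ∑ u, c u uh *
                    (∑ x, Q x u * (PX x * K x y / (∑ x', PX x' * K x' y))))))}
      (Finset.univ.sup' Finset.univ_nonempty
        (fun y => Finset.univ.sup' Finset.univ_nonempty
          (fun x => log (PX x / (PX x * K x y / (∑ x', PX x' * K x' y)))))) := by
  classical
  have hpost := posterior_pos hPXpos hKpos
  set f : 𝒴 → 𝒳 → ℝ := fun y x => log (PX x / posterior PX K y x)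
  refine ⟨?_, fun b hb => ?_⟩
  · rintro r ⟨𝒰, _, _, Q, Uhat, _, _, c, hQ, -, hc, hA, rfl⟩
    obtain ⟨y₀, -, hy₀⟩ := exists_mem_eq_inf' univ_nonempty
      fun y => minExpectedCost Q c (posterior PX K y)
    obtain ⟨x₀, hx₀⟩ := exists_log_minExpectedCost_div_le hQ hc hPXpos (hpost y₀) hA
    exact (hy₀ ▸ hx₀).trans (le_sup'_of_le _ (mem_univ y₀) (le_sup' (f y₀) (mem_univ x₀)))
  · obtain ⟨y₁, -, hy₁⟩ :=
      exists_mem_eq_sup' univ_nonempty fun y => univ.sup' univ_nonempty (f y)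
    obtain ⟨x₁, -, hx₁⟩ := exists_mem_eq_sup' univ_nonempty (f y₁)
    set Q : 𝒳 → 𝒳 → ℝ := fun x u => if u = x then 1 else 0
    set c : 𝒳 → PUnit → ℝ := fun u _ => if u = x₁ then 1 else 0
    have hQ : ∀ x u, 0 ≤ Q x u := fun x u => by positivity
    have hA : 0 < minExpectedCost Q c PX := by
      simpa only [Q, c, minExpectedCost_indicator] using hPXpos x₁
    have hr := hb ⟨𝒳, inferInstance, inferInstance, Q, PUnit, inferInstance, inferInstance, c,
      hQ, fun x => by simp [Q], fun u _ => by positivity, hA, rfl⟩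
    change log (minExpectedCost Q c PX /
      univ.inf' univ_nonempty fun y => minExpectedCost Q c (posterior PX K y)) ≤ b at hr
    simp only [Q, c, minExpectedCost_indicator] at hr
    exact (hy₁.trans hx₁).trans_le
      ((log_div_le_log_div_inf' (hPXpos x₁) (fun y => hpost y x₁) y₁).trans hr)

/-- Maximal realizable cost equals the worst-case maximal inverse information density:
the supremum over all randomized functions `U` of `X` and all nonnegative cost functions `c`
(with positive minimal prior expected cost) of
`log(min_uh E[c(U,uh)] / min_y min_uh E[c(U,uh) | Y=y])` equals
`max_y max_x log(P_X(x)/P_{X|Y=y}(x))`; in particular the supremum over `U` is superfluous. -/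
theorem stmt_17 {𝒳 𝒴 : Type} [Fintype 𝒳] [Nonempty 𝒳] [Fintype 𝒴] [Nonempty 𝒴]
    (PX : 𝒳 → ℝ) (hPXpos : ∀ x, 0 < PX x) (hPXsum : ∑ x, PX x = 1)
    (K : 𝒳 → 𝒴 → ℝ) (hKpos : ∀ x y, 0 < K x y) (hKsum : ∀ x, ∑ y, K x y = 1) :
    IsLUB
      { r : ℝ |
        ∃ (𝒰 : Type) (_ : Fintype 𝒰) (_ : Nonempty 𝒰) (Q : 𝒳 → 𝒰 → ℝ)
          (Uhat : Type) (_ : Fintype Uhat) (_ : Nonempty Uhat) (c : 𝒰 → Uhat → ℝ),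
          (∀ x u, 0 ≤ Q x u) ∧ (∀ x, ∑ u, Q x u = 1) ∧ (∀ u uh, 0 ≤ c u uh) ∧
          (0 < Finset.univ.inf' Finset.univ_nonempty
            (fun uh => ∑ u, c u uh * (∑ x, Q x u * PX x))) ∧
          r = log
            (Finset.univ.inf' Finset.univ_nonempty
                (fun uh => ∑ u, c u uh * (∑ x, Q x u * PX x)) /
              Finset.univ.inf' Finset.univ_nonempty
                (fun y => Finset.univ.inf' Finset.univ_nonempty
                  (fun uh => ∑ u, c u uh *
                    (∑ x, Q x u * (PX x * K x y / (∑ x', PX x' * K x' y))))))}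
      (Finset.univ.sup' Finset.univ_nonempty
        (fun y => Finset.univ.sup' Finset.univ_nonempty
          (fun x => log (PX x / (PX x * K x y / (∑ x', PX x' * K x' y)))))) :=
  stmt_17_general PX hPXpos K hKpos
end

section
/- (Maximal cost leakage underestimates the expected leakage.) Assume P_{Y|X=x}(y) > 0 for all x ∈ 𝒳, y ∈ 𝒴. Then for every finite nonempty set 𝒰, kernel P_{U|X}, finite nonempty set Û, and cost function c : 𝒰 × Û → ℝ≥0 with min_{û∈Û} ∑_u c(u,û)·P_U(u) > 0, one has log( min_{û∈Û} ∑_u c(u,û)·P_U(u) ) − log( ∑_{y∈𝒴} P_Y(y) · min_{û∈Û} ∑_u c(u,û)·P_{U|Y=y}(u) ) ≤ ∑_{y∈𝒴} P_Y(y) · max_{x∈𝒳} log( P_X(x) / P_{X|Y=y}(x) ). -/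
open Finset Real

/-- Maximal cost leakage underestimates the expected leakage: for every randomized function
`U` of `X` (kernel `Q`) and every nonnegative cost function `c` with positive minimal prior
expected cost,
`log(min_uh E[c(U,uh)]) - log(∑_y P_Y(y) · min_uh E[c(U,uh) | Y=y]) ≤
 ∑_y P_Y(y) · max_x log(P_X(x)/P_{X|Y=y}(x))`. -/
theorem stmt_18 {𝒳 𝒴 : Type} [Fintype 𝒳] [Nonempty 𝒳] [Fintype 𝒴] [Nonempty 𝒴]
    (PX : 𝒳 → ℝ) (hPXpos : ∀ x, 0 < PX x) (hPXsum : ∑ x, PX x = 1)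
    (K : 𝒳 → 𝒴 → ℝ) (hKpos : ∀ x y, 0 < K x y) (hKsum : ∀ x, ∑ y, K x y = 1)
    (𝒰 : Type) [Fintype 𝒰] [Nonempty 𝒰]
    (Q : 𝒳 → 𝒰 → ℝ) (hQnn : ∀ x u, 0 ≤ Q x u) (hQsum : ∀ x, ∑ u, Q x u = 1)
    (Uhat : Type) [Fintype Uhat] [Nonempty Uhat]
    (c : 𝒰 → Uhat → ℝ) (hcnn : ∀ u uh, 0 ≤ c u uh)
    (hcpos : 0 < Finset.univ.inf' Finset.univ_nonempty
      (fun uh => ∑ u, c u uh * (∑ x, Q x u * PX x))) :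
    log (Finset.univ.inf' Finset.univ_nonempty
        (fun uh => ∑ u, c u uh * (∑ x, Q x u * PX x))) -
      log (∑ y, (∑ x, PX x * K x y) *
        Finset.univ.inf' Finset.univ_nonempty
          (fun uh => ∑ u, c u uh *
            (∑ x, Q x u * (PX x * K x y / (∑ x', PX x' * K x' y))))) ≤
    ∑ y, (∑ x, PX x * K x y) *
      Finset.univ.sup' Finset.univ_nonempty
        (fun x => log (PX x / (PX x * K x y / (∑ x', PX x' * K x' y)))) := by
  classical
  have hPYpos : ∀ y : 𝒴, 0 < ∑ x, PX x * K x y := fun y =>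
    Finset.sum_pos (fun x _ => mul_pos (hPXpos x) (hKpos x y)) Finset.univ_nonempty
  set post : 𝒴 → 𝒳 → ℝ := fun y x => PX x * K x y / (∑ x', PX x' * K x' y) with hpost
  have hpostpos : ∀ y x, 0 < post y x := fun y x =>
    div_pos (mul_pos (hPXpos x) (hKpos x y)) (hPYpos y)
  set r : 𝒴 → 𝒳 → ℝ := fun y x => post y x / PX x with hrdef
  have hrpos : ∀ y x, 0 < r y x := fun y x => div_pos (hpostpos y x) (hPXpos x)
  set t : 𝒴 → ℝ := fun y => Finset.univ.inf' Finset.univ_nonempty (r y) with htdef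
  have htpos : ∀ y, 0 < t y := fun y =>
    (Finset.lt_inf'_iff _).2 fun x _ => hrpos y x
  set m : ℝ := Finset.univ.inf' Finset.univ_nonempty
      (fun uh => ∑ u, c u uh * (∑ x, Q x u * PX x)) with hmdef
  set M : 𝒴 → ℝ := fun y => Finset.univ.inf' Finset.univ_nonempty
      (fun uh => ∑ u, c u uh * (∑ x, Q x u * post y x)) with hMdef
  have hMy : ∀ y, t y * m ≤ M y := by
    intro y
    apply Finset.le_inf'
    intro uh _
    have h1 : t y * (∑ u, c u uh * (∑ x, Q x u * PX x)) ≤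
        ∑ u, c u uh * (∑ x, Q x u * post y x) := by
      rw [Finset.mul_sum]
      apply Finset.sum_le_sum
      intro u _
      rw [mul_left_comm, Finset.mul_sum]
      apply mul_le_mul_of_nonneg_left _ (hcnn u uh)
      apply Finset.sum_le_sum
      intro x _
      rw [mul_left_comm]
      apply mul_le_mul_of_nonneg_left _ (hQnn x u)
      have hle : t y ≤ r y x := Finset.inf'_le _ (Finset.mem_univ x)
      have h2 := mul_le_mul_of_nonneg_right hle (hPXpos x).le
      rwa [hrdef, div_mul_cancel₀ _ (hPXpos x).ne'] at h2
    calc t y * m ≤ t y * (∑ u, c u uh * (∑ x, Q x u * PX x)) :=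
          mul_le_mul_of_nonneg_left (Finset.inf'_le _ (Finset.mem_univ uh)) (htpos y).le
      _ ≤ _ := h1
  set T : ℝ := ∑ y, (∑ x, PX x * K x y) * t y with hTdef
  have hTpos : 0 < T :=
    Finset.sum_pos (fun y _ => mul_pos (hPYpos y) (htpos y)) Finset.univ_nonempty
  have hS : m * T ≤ ∑ y, (∑ x, PX x * K x y) * M y := by
    rw [hTdef, Finset.mul_sum]
    apply Finset.sum_le_sum
    intro y _
    rw [mul_left_comm]
    exact mul_le_mul_of_nonneg_left ((mul_comm (t y) m ▸ hMy y)) (hPYpos y).le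
  have hlogS : log m + log T ≤ log (∑ y, (∑ x, PX x * K x y) * M y) := by
    rw [← Real.log_mul (ne_of_gt hcpos) hTpos.ne']
    exact Real.log_le_log (mul_pos hcpos hTpos) hS
  have hstep1 : log m - log (∑ y, (∑ x, PX x * K x y) * M y) ≤ - log T := by linarith
  have hPYsum : ∑ y, (∑ x, PX x * K x y) = 1 := by
    rw [Finset.sum_comm]
    simp_rw [← Finset.mul_sum, hKsum, mul_one, hPXsum]
  have hJensen : ∑ y, (∑ x, PX x * K x y) * log (t y) ≤ log T := by
    have := strictConcaveOn_log_Ioi.concaveOn.le_map_sum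
      (t := Finset.univ) (w := fun y : 𝒴 => ∑ x, PX x * K x y) (p := t)
      (fun y _ => (hPYpos y).le) hPYsum (fun y _ => Set.mem_Ioi.2 (htpos y))
    simpa [smul_eq_mul, hTdef] using this
  have hstep2 : - log T ≤ ∑ y, (∑ x, PX x * K x y) * (- log (t y)) := by
    simp only [mul_neg, Finset.sum_neg_distrib]
    linarith
  refine hstep1.trans (hstep2.trans ?_)
  apply Finset.sum_le_sum
  intro y _
  apply mul_le_mul_of_nonneg_left _ (hPYpos y).le
  obtain ⟨x0, _, hx0⟩ := Finset.exists_mem_eq_inf' (Finset.univ_nonempty) (r y)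
  have hkey : - log (t y) = log (PX x0 / post y x0) := by
    rw [htdef]
    simp only
    rw [hx0, ← Real.log_inv, hrdef]
    simp only
    rw [inv_div]
  rw [hkey]
  exact Finset.le_sup' (fun x => log (PX x / post y x)) (Finset.mem_univ x0)
end

section
/- (Binary uniform case: equivalence of PML and LIP.) Suppose 𝒳 = {x₁, x₂} with P_X(x₁) = P_X(x₂) = 1/2, and let 0 ≤ ε < log 2. Then a mechanism P_{Y|X} satisfies ε-PML if and only if it satisfies ε_LIP-LIP, where ε_LIP := log( 1 / (2 − e^{ε}) ) (equivalently, ε_LIP = log( p_min / (1 − e^{ε}(1 − p_min)) ) with p_min = 1/2). -/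
open Finset Real

/-- Binary uniform case (Example 1): for `𝒳` of size two with uniform prior and
`0 ≤ ε < log 2`, a mechanism satisfies `ε`-PML iff it satisfies `ε_LIP`-LIP, where
`ε_LIP = log(1 / (2 - e^ε))`. -/
theorem stmt_19 {𝒳 𝒴 : Type} [Fintype 𝒳] [Fintype 𝒴] [Nonempty 𝒴]
    (hcard : Fintype.card 𝒳 = 2)
    (PX : 𝒳 → ℝ) (hPX : ∀ x, PX x = 1 / 2)
    (K : 𝒳 → 𝒴 → ℝ) (hKnn : ∀ x y, 0 ≤ K x y) (hKsum : ∀ x, ∑ y, K x y = 1)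
    (ε : ℝ) (hε : 0 ≤ ε) (hε2 : ε < log 2) :
    (∀ y, 0 < (∑ x, PX x * K x y) →
      ∀ x, PX x * K x y / (∑ x', PX x' * K x' y) ≤ exp ε * PX x) ↔
    (∀ y, 0 < (∑ x, PX x * K x y) →
      ∀ x, exp (-(log (1 / (2 - exp ε)))) * PX x ≤
            PX x * K x y / (∑ x', PX x' * K x' y) ∧
          PX x * K x y / (∑ x', PX x' * K x' y) ≤
            exp (log (1 / (2 - exp ε))) * PX x) := by
  classical
  obtain ⟨a, b, hab, huniv⟩ := Finset.card_eq_two.mp hcard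
  have hc1 : 1 ≤ exp ε := by rw [← exp_zero]; exact exp_le_exp.mpr hε
  have hc2 : exp ε < 2 := by
    calc exp ε < exp (log 2) := exp_lt_exp.mpr hε2
    _ = 2 := exp_log (by norm_num)
  have hpos : 0 < 2 - exp ε := by linarith
  have he1 : exp (log (1 / (2 - exp ε))) = 1 / (2 - exp ε) :=
    exp_log (by positivity)
  have he2 : exp (-(log (1 / (2 - exp ε)))) = 2 - exp ε := by
    rw [exp_neg, he1]; field_simp
  have hd : (1 / (2 - exp ε)) * (2 - exp ε) = 1 := by field_simp
  constructor
  · intro h y hy x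
    have hsum : ∑ x', PX x' * K x' y = PX a * K a y + PX b * K b y := by
      rw [show (univ : Finset 𝒳) = {a, b} from huniv, Finset.sum_pair hab]
    have hS1 : PX a * K a y / (∑ x', PX x' * K x' y)
        + PX b * K b y / (∑ x', PX x' * K x' y) = 1 := by
      rw [← add_div, ← hsum]; exact div_self (ne_of_gt hy)
    have hx : x = a ∨ x = b := by
      have : x ∈ ({a, b} : Finset 𝒳) := huniv ▸ Finset.mem_univ x
      simpa using this
    rcases hx with rfl | rfl
    · have ha := h y hy x
      have hb := h y hy b
      rw [hPX x] at ha ⊢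
      rw [hPX b] at hb
      rw [hPX x, hPX b] at hS1
      rw [he1, he2]
      constructor
      · linarith
      · nlinarith [sq_nonneg (exp ε - 1)]
    · have ha := h y hy a
      have hb := h y hy x
      rw [hPX x] at hb ⊢
      rw [hPX a] at ha
      rw [hPX a, hPX x] at hS1
      rw [he1, he2]
      constructor
      · linarith
      · nlinarith [sq_nonneg (exp ε - 1)]
  · intro h y hy x
    have hsum : ∑ x', PX x' * K x' y = PX a * K a y + PX b * K b y := by
      rw [show (univ : Finset 𝒳) = {a, b} from huniv, Finset.sum_pair hab]
    have hS1 : PX a * K a y / (∑ x', PX x' * K x' y)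
        + PX b * K b y / (∑ x', PX x' * K x' y) = 1 := by
      rw [← add_div, ← hsum]; exact div_self (ne_of_gt hy)
    have hx : x = a ∨ x = b := by
      have : x ∈ ({a, b} : Finset 𝒳) := huniv ▸ Finset.mem_univ x
      simpa using this
    rcases hx with rfl | rfl
    · have hb := (h y hy b).1
      rw [hPX b, he2] at hb
      rw [hPX x, hPX b] at hS1
      rw [hPX x]
      linarith
    · have ha := (h y hy a).1
      rw [hPX a, he2] at ha
      rw [hPX a, hPX x] at hS1
      rw [hPX x]
      linarith
end
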